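/- arXiv:2505.12178 — 13 statements merged into one kernel-verified Lean document; each statement's English description precedes it below -/
import Mathlib

section
/- For any integer n ≥ 2 and any non-negative real numbers a_1, …, a_n, the average over all permutations π of [n] of the product ∏_{i ∈ fix(π)} a_i is at least the average over all 2-element subsets {i,j} of [n] of √(a_i a_j); that is, (1/n!) ∑_{π ∈ S_n} ∏_{i: π(i)=i} a_i ≥ (1/C(n,2)) ∑_{1 ≤ i < j ≤ n} √(a_i a_j). -/
open Finset

lemma card_fixing {n : ℕ} (s : Finset (Fin n)) :
    (Finset.univ.filter fun π : Equiv.Perm (Fin n) => ∀ x ∈ s, π x = x).card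
      = (n - s.card).factorial := by
  classical
  have h1 : (Finset.univ.filter fun π : Equiv.Perm (Fin n) => ∀ x ∈ s, π x = x).card
      = Fintype.card {π : Equiv.Perm (Fin n) // ∀ a : Fin n, ¬ (a ∉ s) → π a = a} := by
    rw [Fintype.card_subtype]
    congr 1
    apply Finset.filter_congr
    intro π _
    simp [not_not]
  rw [h1, ← Fintype.card_congr (Equiv.Perm.subtypeEquivSubtypePerm (fun x : Fin n => x ∉ s)),
    Fintype.card_perm]
  congr 1
  have : Fintype.card {x : Fin n // x ∉ s} = Fintype.card (Fin n) - Fintype.card {x : Fin n // x ∈ s} :=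
    Fintype.card_subtype_compl _
  rw [this, Fintype.card_coe, Fintype.card_fin]

lemma card_fix_one {n : ℕ} (i : Fin n) :
    (Finset.univ.filter fun π : Equiv.Perm (Fin n) => π i = i).card
      = (n - 1).factorial := by
  classical
  have h := card_fixing ({i} : Finset (Fin n))
  rw [Finset.card_singleton] at h
  rw [← h]
  congr 1
  apply Finset.filter_congr
  intro π _
  simp

lemma card_fix_two {n : ℕ} (i j : Fin n) (hij : i ≠ j) :
    (Finset.univ.filter fun π : Equiv.Perm (Fin n) => π i = i ∧ π j = j).card
      = (n - 2).factorial := by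
  classical
  have h := card_fixing ({i, j} : Finset (Fin n))
  rw [Finset.card_insert_of_notMem (by simp [hij]), Finset.card_singleton] at h
  rw [← h]
  congr 1
  apply Finset.filter_congr
  intro π _
  simp only [Finset.mem_insert, Finset.mem_singleton, eq_iff_iff]
  constructor
  · rintro ⟨h1, h2⟩ x hx
    rcases hx with rfl | rfl <;> assumption
  · intro h
    exact ⟨h i (Or.inl rfl), h j (Or.inr rfl)⟩

lemma sum_perm_fix_one {n : ℕ} (c : Fin n → ℝ) :
    ∑ π : Equiv.Perm (Fin n), ∑ i ∈ univ.filter (fun i => π i = i), c i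
      = ((n - 1).factorial : ℝ) * ∑ i, c i := by
  classical
  have h1 : ∀ π : Equiv.Perm (Fin n),
      ∑ i ∈ univ.filter (fun i => π i = i), c i = ∑ i, if π i = i then c i else 0 :=
    fun π => Finset.sum_filter _ _
  rw [Finset.sum_congr rfl (fun π _ => h1 π), Finset.sum_comm, Finset.mul_sum]
  apply Finset.sum_congr rfl
  intro i _
  rw [← Finset.sum_filter, Finset.sum_const, card_fix_one i, nsmul_eq_mul]

lemma sum_perm_fix_two {n : ℕ} (d : Fin n → Fin n → ℝ) :
    ∑ π : Equiv.Perm (Fin n), ∑ i ∈ univ.filter (fun i => π i = i),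
        ∑ j ∈ (univ.filter (fun i => π i = i)).erase i, d i j
      = ((n - 2).factorial : ℝ) * ∑ i, ∑ j ∈ univ.erase i, d i j := by
  classical
  have h1 : ∀ π : Equiv.Perm (Fin n),
      ∑ i ∈ univ.filter (fun i => π i = i), ∑ j ∈ (univ.filter (fun i => π i = i)).erase i, d i j
        = ∑ i, ∑ j ∈ univ.erase i, if π i = i ∧ π j = j then d i j else 0 := by
    intro π
    have h2 : ∀ i, ∑ j ∈ (univ.filter (fun k => π k = k)).erase i, d i j
        = ∑ j ∈ univ.erase i, if π j = j then d i j else 0 := by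
      intro i
      rw [← Finset.filter_erase, Finset.sum_filter]
    rw [Finset.sum_congr rfl (fun i _ => h2 i), Finset.sum_filter]
    apply Finset.sum_congr rfl
    intro i _
    by_cases hpi : π i = i
    · simp [hpi]
    · simp [hpi]
  rw [Finset.sum_congr rfl (fun π _ => h1 π), Finset.sum_comm, Finset.mul_sum]
  apply Finset.sum_congr rfl
  intro i _
  rw [Finset.sum_comm, Finset.mul_sum]
  apply Finset.sum_congr rfl
  intro j hj
  have hij : i ≠ j := fun h => (Finset.mem_erase.mp hj).1 h.symm
  rw [← Finset.sum_filter, Finset.sum_const, card_fix_two i j hij, nsmul_eq_mul]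

/-- Weierstrass product inequality. -/
lemma weier {ι : Type*} [DecidableEq ι] (F : Finset ι) (t : ι → ℝ)
    (h0 : ∀ i, 0 ≤ t i) (h1 : ∀ i, t i ≤ 1) :
    1 - ∑ i ∈ F, (1 - t i) ≤ ∏ i ∈ F, t i := by
  classical
  induction F using Finset.induction with
  | empty => simp
  | @insert a F ha ih =>
    rw [Finset.prod_insert ha, Finset.sum_insert ha]
    have hS : (0:ℝ) ≤ ∑ i ∈ F, (1 - t i) :=
      Finset.sum_nonneg fun i _ => by linarith [h1 i]
    have h2 : t a * (1 - ∑ i ∈ F, (1 - t i)) ≤ t a * ∏ i ∈ F, t i :=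
      mul_le_mul_of_nonneg_left ih (h0 a)
    nlinarith [h0 a, h1 a]

lemma prod_split {ι : Type*} [DecidableEq ι] (F : Finset ι) (t u : ι → ℝ)
    (ht : ∀ i, 0 ≤ t i) (hu : ∀ i, 0 ≤ u i) :
    (∏ i ∈ F, t i) + ∑ i ∈ F, u i * ∏ j ∈ F.erase i, t j ≤ ∏ i ∈ F, (t i + u i) := by
  classical
  induction F using Finset.induction with
  | empty => simp
  | @insert a F ha ih =>
    rw [Finset.prod_insert ha, Finset.prod_insert ha, Finset.sum_insert ha,
      Finset.erase_insert ha]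
    have e1 : ∀ i ∈ F, u i * ∏ j ∈ (insert a F).erase i, t j
        = t a * (u i * ∏ j ∈ F.erase i, t j) := by
      intro i hi
      have hia : i ≠ a := by rintro rfl; exact ha hi
      rw [Finset.erase_insert_of_ne hia.symm, Finset.prod_insert (fun h => ha (Finset.mem_of_mem_erase h))]
      ring
    rw [Finset.sum_congr rfl e1, ← Finset.mul_sum]
    have hP : (0:ℝ) ≤ ∏ i ∈ F, t i := Finset.prod_nonneg fun i _ => ht i
    have hS : (0:ℝ) ≤ ∑ i ∈ F, u i * ∏ j ∈ F.erase i, t j :=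
      Finset.sum_nonneg fun i _ => mul_nonneg (hu i) (Finset.prod_nonneg fun j _ => ht j)
    have h2 : (t a + u a) * ((∏ i ∈ F, t i) + ∑ i ∈ F, u i * ∏ j ∈ F.erase i, t j)
        ≤ (t a + u a) * ∏ i ∈ F, (t i + u i) :=
      mul_le_mul_of_nonneg_left ih (by linarith [ht a, hu a])
    nlinarith [ht a, hu a]

/-- Key per-fixed-set lower bound. -/
lemma key_bound {ι : Type*} [DecidableEq ι] (F : Finset ι) (a t u : ι → ℝ)
    (hat : ∀ i, a i = t i + u i) (ht0 : ∀ i, 0 ≤ t i) (ht1 : ∀ i, t i ≤ 1)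
    (hu : ∀ i, 0 ≤ u i) :
    (1 - ∑ i ∈ F, (1 - t i)) + ∑ i ∈ F, u i * (1 - ∑ j ∈ F.erase i, (1 - t j))
      ≤ ∏ i ∈ F, a i := by
  classical
  have h1 : ∀ i ∈ F, u i * (1 - ∑ j ∈ F.erase i, (1 - t j)) ≤ u i * ∏ j ∈ F.erase i, t j :=
    fun i _ => mul_le_mul_of_nonneg_left (weier _ t ht0 ht1) (hu i)
  calc (1 - ∑ i ∈ F, (1 - t i)) + ∑ i ∈ F, u i * (1 - ∑ j ∈ F.erase i, (1 - t j))
      ≤ (∏ i ∈ F, t i) + ∑ i ∈ F, u i * ∏ j ∈ F.erase i, t j := by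
        exact add_le_add (weier F t ht0 ht1) (Finset.sum_le_sum h1)
    _ ≤ ∏ i ∈ F, (t i + u i) := prod_split F t u ht0 hu
    _ = ∏ i ∈ F, a i := Finset.prod_congr rfl fun i _ => (hat i).symm

lemma erase_sum_ite {n : ℕ} (i : Fin n) (f : Fin n → ℝ) :
    ∑ j ∈ univ.erase i, f j = ∑ j, if i = j then 0 else f j := by
  rw [← Finset.filter_ne (univ : Finset (Fin n)) i, Finset.sum_filter]
  exact Finset.sum_congr rfl fun j _ => by
    rcases eq_or_ne i j with h | h
    · simp [h]
    · simp [h]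

lemma swap_sum {n : ℕ} (g : Fin n → Fin n → ℝ) :
    ∑ i, ∑ j ∈ univ.erase i, g i j = ∑ i, ∑ j ∈ univ.erase i, g j i := by
  have h1 : ∀ h : Fin n → Fin n → ℝ,
      ∑ i, ∑ j ∈ univ.erase i, h i j = ∑ i, ∑ j, if i = j then 0 else h i j :=
    fun h => Finset.sum_congr rfl fun i _ => erase_sum_ite i (h i)
  rw [h1 g, h1 (fun i j => g j i)]
  rw [Finset.sum_comm]
  apply Finset.sum_congr rfl; intro i _
  apply Finset.sum_congr rfl; intro j _
  rcases eq_or_ne i j with h | h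
  · simp [h]
  · simp [h, h.symm]

lemma pair_double {n : ℕ} (a : Fin n → ℝ) :
    ∑ i, ∑ j ∈ univ.erase i, Real.sqrt (a i * a j)
      = 2 * ∑ S ∈ (univ : Finset (Fin n)).powersetCard 2, Real.sqrt (∏ i ∈ S, a i) := by
  classical
  have hmaps : ∀ p ∈ (univ : Finset (Fin n)).offDiag,
      ({p.1, p.2} : Finset (Fin n)) ∈ (univ : Finset (Fin n)).powersetCard 2 := by
    intro p hp
    rw [Finset.mem_offDiag] at hp
    rw [Finset.mem_powersetCard]
    refine ⟨by intro x _; exact Finset.mem_univ x, ?_⟩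
    rw [Finset.card_insert_of_notMem (by simp [hp.2.2]), Finset.card_singleton]
  have hfib := Finset.sum_fiberwise_of_maps_to hmaps
    (fun p : Fin n × Fin n => Real.sqrt (a p.1 * a p.2))
  have h1 : ∑ p ∈ (univ : Finset (Fin n)).offDiag, Real.sqrt (a p.1 * a p.2)
      = ∑ i, ∑ j ∈ univ.erase i, Real.sqrt (a i * a j) := by
    rw [show (univ : Finset (Fin n)).offDiag
        = ((univ ×ˢ univ).filter fun p : Fin n × Fin n => p.1 ≠ p.2) by ext p; simp]
    rw [Finset.sum_filter, Finset.sum_product]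
    exact Finset.sum_congr rfl fun i _ => by
      rw [erase_sum_ite]
      exact Finset.sum_congr rfl fun j _ => by
        rcases eq_or_ne i j with h | h
        · simp [h]
        · simp [h]
  rw [← h1, ← hfib, Finset.mul_sum]
  apply Finset.sum_congr rfl
  intro S hS
  obtain ⟨hsub, hcard⟩ := Finset.mem_powersetCard.mp hS
  obtain ⟨x, y, hxy, rfl⟩ := Finset.card_eq_two.mp hcard
  have hfilter : ((univ : Finset (Fin n)).offDiag.filter
      fun p => ({p.1, p.2} : Finset (Fin n)) = {x, y}) = {(x, y), (y, x)} := by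
    ext p
    rw [Finset.mem_filter, Finset.mem_offDiag]
    constructor
    · rintro ⟨⟨-, -, hne⟩, hset⟩
      have h1 : p.1 ∈ ({x, y} : Finset (Fin n)) := by
        rw [← hset]; exact Finset.mem_insert_self _ _
      have h2 : p.2 ∈ ({x, y} : Finset (Fin n)) := by
        rw [← hset]; exact Finset.mem_insert_of_mem (Finset.mem_singleton_self _)
      simp only [Finset.mem_insert, Finset.mem_singleton] at h1 h2 ⊢
      rcases h1 with h1 | h1 <;> rcases h2 with h2 | h2
      · exact absurd (h1.trans h2.symm) hne
      · left; exact Prod.ext h1 h2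
      · right; exact Prod.ext h1 h2
      · exact absurd (h1.trans h2.symm) hne
    · intro hp
      simp only [Finset.mem_insert, Finset.mem_singleton] at hp
      rcases hp with rfl | rfl
      · exact ⟨⟨Finset.mem_univ _, Finset.mem_univ _, hxy⟩, rfl⟩
      · exact ⟨⟨Finset.mem_univ _, Finset.mem_univ _, hxy.symm⟩, Finset.pair_comm y x⟩
  rw [hfilter, Finset.sum_pair (by simp [Prod.ext_iff]; intro h; exact absurd h hxy),
    Finset.prod_pair hxy]
  rw [mul_comm (a y) (a x)]
  ring

lemma sqrt_pair' (x y tx ty ux uy : ℝ) (hx : x = tx + ux) (hy : y = ty + uy)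
    (htx0 : 0 ≤ tx) (htx1 : tx ≤ 1) (hty0 : 0 ≤ ty) (hty1 : ty ≤ 1)
    (hux : 0 ≤ ux) (huy : 0 ≤ uy) (hox : ux * tx = ux) (hoy : uy * ty = uy) :
    2 * Real.sqrt (x * y) ≤ (tx + ux * ty) + (ty + uy * tx) := by
  have hx0 : 0 ≤ x := by linarith
  have hy0 : 0 ≤ y := by linarith
  have hs2 := Real.sq_sqrt (mul_nonneg hx0 hy0)
  have hs0 := Real.sqrt_nonneg (x * y)
  set s := Real.sqrt (x * y) with hs
  rcases eq_or_ne ux 0 with hux0 | hux0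
  · rcases eq_or_ne uy 0 with huy0 | huy0
    · -- x = tx, y = ty
      subst hux0 huy0
      nlinarith [sq_nonneg (x - y), sq_nonneg (x + y - 2 * s)]
    · have hty' : ty = 1 := by
        have : uy * (ty - 1) = 0 := by linarith [hoy]
        rcases mul_eq_zero.mp this with h | h
        · exact absurd h huy0
        · linarith
      subst hux0; rw [hty'] at hy ⊢
      -- x = tx ≤ 1, y = 1 + uy ; RHS = tx + 1 + uy*tx = 1 + x*y
      have hrhs : (tx + 0 * 1) + (1 + uy * tx) = 1 + x * y := by rw [hx, hy]; ring
      rw [hrhs]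
      nlinarith [sq_nonneg (s - 1)]
  · have htx' : tx = 1 := by
      have : ux * (tx - 1) = 0 := by linarith [hox]
      rcases mul_eq_zero.mp this with h | h
      · exact absurd h hux0
      · linarith
    rcases eq_or_ne uy 0 with huy0 | huy0
    · subst huy0; rw [htx'] at hx ⊢
      have hrhs : (1 + ux * ty) + (ty + 0 * 1) = 1 + x * y := by rw [hx, hy]; ring
      rw [hrhs]
      nlinarith [sq_nonneg (s - 1)]
    · have hty' : ty = 1 := by
        have : uy * (ty - 1) = 0 := by linarith [hoy]
        rcases mul_eq_zero.mp this with h | h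
        · exact absurd h huy0
        · linarith
      rw [htx', hty']
      have hrhs : (1 + ux * 1) + (1 + uy * 1) = x + y := by rw [hx, hy, htx', hty']; ring
      rw [hrhs]
      nlinarith [sq_nonneg (x - y), sq_nonneg (x + y - 2 * s)]

lemma main_core {n : ℕ} (hn : 2 ≤ n) (a t u : Fin n → ℝ)
    (hat : ∀ i, a i = t i + u i) (ht0 : ∀ i, 0 ≤ t i) (ht1 : ∀ i, t i ≤ 1)
    (hu0 : ∀ i, 0 ≤ u i) (horth : ∀ i, u i * t i = u i) :
    2 * ((n - 2).factorial : ℝ) *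
        ∑ S ∈ (univ : Finset (Fin n)).powersetCard 2, Real.sqrt (∏ i ∈ S, a i)
      ≤ ∑ π : Equiv.Perm (Fin n), ∏ i ∈ univ.filter (fun i => π i = i), a i := by
  classical
  have hcast : ((n - 1 : ℕ) : ℝ) = (n : ℝ) - 1 := by
    have h1 : (1 : ℕ) ≤ n := le_trans one_le_two hn
    push_cast [Nat.cast_sub h1]
    ring
  have hf1 : ((n - 1).factorial : ℝ) = ((n : ℝ) - 1) * ((n - 2).factorial : ℝ) := by
    have h1 : (n - 1) * (n - 1 - 1).factorial = (n - 1).factorial :=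
      Nat.mul_factorial_pred (by omega)
    have h2 : n - 1 - 1 = n - 2 := by omega
    rw [h2] at h1
    rw [← h1, Nat.cast_mul, hcast]
  have hf0 : (n.factorial : ℝ) = (n : ℝ) * ((n - 1).factorial : ℝ) := by
    have h1 : n * (n - 1).factorial = n.factorial := Nat.mul_factorial_pred (by omega)
    rw [← h1, Nat.cast_mul]
  -- Step 1: pointwise lower bound summed over permutations
  have hTlow : ∑ π : Equiv.Perm (Fin n),
      ((1 - ∑ i ∈ univ.filter (fun i => π i = i), (1 - t i)) +
        ∑ i ∈ univ.filter (fun i => π i = i),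
          (u i * (1 - ∑ j ∈ (univ.filter (fun i => π i = i)).erase i, (1 - t j))))
      ≤ ∑ π : Equiv.Perm (Fin n), ∏ i ∈ univ.filter (fun i => π i = i), a i :=
    Finset.sum_le_sum fun π _ => key_bound _ a t u hat ht0 ht1 hu0
  -- Step 2: compute the left-hand sum
  have hsplit : ∑ π : Equiv.Perm (Fin n),
      ((1 - ∑ i ∈ univ.filter (fun i => π i = i), (1 - t i)) +
        ∑ i ∈ univ.filter (fun i => π i = i),
          (u i * (1 - ∑ j ∈ (univ.filter (fun i => π i = i)).erase i, (1 - t j))))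
      = (n.factorial : ℝ) - ((n - 1).factorial : ℝ) * ∑ i, (1 - t i) +
        (((n - 1).factorial : ℝ) * ∑ i, u i -
          ((n - 2).factorial : ℝ) * ∑ i, ∑ j ∈ univ.erase i, u i * (1 - t j)) := by
    have e1 : ∀ π : Equiv.Perm (Fin n),
        ∑ i ∈ univ.filter (fun i => π i = i),
            (u i * (1 - ∑ j ∈ (univ.filter (fun i => π i = i)).erase i, (1 - t j)))
          = ∑ i ∈ univ.filter (fun i => π i = i), u i -
            ∑ i ∈ univ.filter (fun i => π i = i),
              ∑ j ∈ (univ.filter (fun i => π i = i)).erase i, u i * (1 - t j) := by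
      intro π
      rw [← Finset.sum_sub_distrib]
      apply Finset.sum_congr rfl
      intro i _
      rw [mul_sub, mul_one, Finset.mul_sum]
    rw [Finset.sum_congr rfl (fun π _ => by rw [e1 π]), Finset.sum_add_distrib,
      Finset.sum_sub_distrib, Finset.sum_sub_distrib, sum_perm_fix_one (fun i => 1 - t i),
      sum_perm_fix_one u, sum_perm_fix_two (fun i j => u i * (1 - t j)),
      Finset.sum_const, Finset.card_univ, Fintype.card_perm, Fintype.card_fin,
      nsmul_eq_mul, mul_one]
  -- Step 3: closed forms
  have hone : ∑ i : Fin n, (1 - t i) = (n : ℝ) - ∑ k, t k := by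
    rw [Finset.sum_sub_distrib, Finset.sum_const, Finset.card_univ, Fintype.card_fin,
      nsmul_eq_mul, mul_one]
  have hW : ∑ i : Fin n, ∑ j ∈ univ.erase i, u i * (1 - t j)
      = ((n : ℝ) - 1) * (∑ k, u k) - (∑ k, t k) * (∑ k, u k) + (∑ k, u k) := by
    have e : ∀ i : Fin n, ∑ j ∈ univ.erase i, u i * (1 - t j)
        = ((n : ℝ) - 1) * u i - (∑ k, t k) * u i + u i := by
      intro i
      rw [← Finset.mul_sum, Finset.sum_sub_distrib, Finset.sum_const,
        Finset.card_erase_of_mem (mem_univ i), Finset.card_univ, Fintype.card_fin,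
        Finset.sum_erase_eq_sub (mem_univ i), nsmul_eq_mul, mul_one, hcast]
      linear_combination horth i
    rw [Finset.sum_congr rfl (fun i _ => e i), Finset.sum_add_distrib,
      Finset.sum_sub_distrib, ← Finset.mul_sum, ← Finset.mul_sum]
  have hM : ∑ i : Fin n, ∑ j ∈ univ.erase i, (t i + u i * t j)
      = ((n : ℝ) - 1) * (∑ k, t k) + (∑ k, t k) * (∑ k, u k) - (∑ k, u k) := by
    have e : ∀ i : Fin n, ∑ j ∈ univ.erase i, (t i + u i * t j)
        = ((n : ℝ) - 1) * t i + ((∑ k, t k) * u i - u i) := by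
      intro i
      rw [Finset.sum_add_distrib, Finset.sum_const, Finset.card_erase_of_mem (mem_univ i),
        Finset.card_univ, Fintype.card_fin, ← Finset.mul_sum,
        Finset.sum_erase_eq_sub (mem_univ i), nsmul_eq_mul, hcast]
      linear_combination (-1 : ℝ) * horth i
    rw [Finset.sum_congr rfl (fun i _ => e i), Finset.sum_add_distrib,
      Finset.sum_sub_distrib, ← Finset.mul_sum, ← Finset.mul_sum]
    ring
  -- Step 4: sqrt comparison
  have hMsqrt : ∑ i : Fin n, ∑ j ∈ univ.erase i, Real.sqrt (a i * a j)
      ≤ ∑ i : Fin n, ∑ j ∈ univ.erase i, (t i + u i * t j) := by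
    have hsw : (∑ i : Fin n, ∑ j ∈ univ.erase i, (t i + u i * t j))
        = ∑ i : Fin n, ∑ j ∈ univ.erase i, (t j + u j * t i) :=
      swap_sum (fun i j => t i + u i * t j)
    have h2 : ∑ i : Fin n, ∑ j ∈ univ.erase i, (2 * Real.sqrt (a i * a j))
        ≤ ∑ i : Fin n, ∑ j ∈ univ.erase i, ((t i + u i * t j) + (t j + u j * t i)) :=
      Finset.sum_le_sum fun i _ => Finset.sum_le_sum fun j _ =>
        sqrt_pair' (a i) (a j) (t i) (t j) (u i) (u j) (hat i) (hat j) (ht0 i) (ht1 i)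
          (ht0 j) (ht1 j) (hu0 i) (hu0 j) (horth i) (horth j)
    have h3 : ∑ i : Fin n, ∑ j ∈ univ.erase i, ((t i + u i * t j) + (t j + u j * t i))
        = (∑ i : Fin n, ∑ j ∈ univ.erase i, (t i + u i * t j)) +
          (∑ i : Fin n, ∑ j ∈ univ.erase i, (t j + u j * t i)) := by
      rw [← Finset.sum_add_distrib]
      exact Finset.sum_congr rfl fun i _ => by rw [← Finset.sum_add_distrib]
    have h4 : ∑ i : Fin n, ∑ j ∈ univ.erase i, (2 * Real.sqrt (a i * a j))
        = 2 * ∑ i : Fin n, ∑ j ∈ univ.erase i, Real.sqrt (a i * a j) := by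
      rw [Finset.mul_sum]
      exact Finset.sum_congr rfl fun i _ => (Finset.mul_sum _ _ _).symm
    rw [h4, h3, ← hsw] at h2
    linarith
  -- Step 5: conclude
  have hfactnn : (0 : ℝ) ≤ ((n - 2).factorial : ℝ) := Nat.cast_nonneg _
  calc 2 * ((n - 2).factorial : ℝ) *
        ∑ S ∈ (univ : Finset (Fin n)).powersetCard 2, Real.sqrt (∏ i ∈ S, a i)
      = ((n - 2).factorial : ℝ) *
          ∑ i : Fin n, ∑ j ∈ univ.erase i, Real.sqrt (a i * a j) := by
        rw [pair_double a]; ring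
    _ ≤ ((n - 2).factorial : ℝ) * ∑ i : Fin n, ∑ j ∈ univ.erase i, (t i + u i * t j) :=
        mul_le_mul_of_nonneg_left hMsqrt hfactnn
    _ = ∑ π : Equiv.Perm (Fin n),
        ((1 - ∑ i ∈ univ.filter (fun i => π i = i), (1 - t i)) +
          ∑ i ∈ univ.filter (fun i => π i = i),
            (u i * (1 - ∑ j ∈ (univ.filter (fun i => π i = i)).erase i, (1 - t j)))) := by
        rw [hsplit, hM, hone, hW, hf0, hf1]; ring
    _ ≤ _ := hTlow

/-- For any integer `n ≥ 2` and non-negative reals `a_1, …, a_n`,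
the average over all permutations `π` of `[n]` of `∏_{i ∈ fix(π)} a_i` is at least the
average over all 2-element subsets `{i, j}` of `[n]` of `√(a_i a_j)`. -/
theorem fixed_point_measure_ineq (n : ℕ) (hn : 2 ≤ n) (a : Fin n → ℝ)
    (ha : ∀ i, 0 ≤ a i) :
    (1 / (n.factorial : ℝ)) *
        ∑ π : Equiv.Perm (Fin n), ∏ i ∈ Finset.univ.filter (fun i => π i = i), a i ≥
      (1 / (n.choose 2 : ℝ)) *
        ∑ S ∈ (Finset.univ : Finset (Fin n)).powersetCard 2, Real.sqrt (∏ i ∈ S, a i) := by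
  classical
  have hat : ∀ i, a i = min (a i) 1 + (a i - min (a i) 1) := fun i => by ring
  have ht0 : ∀ i, 0 ≤ min (a i) 1 := fun i => le_min (ha i) zero_le_one
  have ht1 : ∀ i, min (a i) 1 ≤ 1 := fun i => min_le_right _ _
  have hu0 : ∀ i, 0 ≤ a i - min (a i) 1 := fun i => sub_nonneg.mpr (min_le_left _ _)
  have horth : ∀ i, (a i - min (a i) 1) * min (a i) 1 = a i - min (a i) 1 := by
    intro i
    rcases le_total (a i) 1 with h | h
    · rw [min_eq_left h]; ring
    · rw [min_eq_right h]; ring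
  have hcore := main_core hn a (fun i => min (a i) 1) (fun i => a i - min (a i) 1)
    hat ht0 ht1 hu0 horth
  set T := ∑ π : Equiv.Perm (Fin n), ∏ i ∈ Finset.univ.filter (fun i => π i = i), a i with hT
  set R := ∑ S ∈ (Finset.univ : Finset (Fin n)).powersetCard 2, Real.sqrt (∏ i ∈ S, a i) with hR
  have hC : (0 : ℝ) < (n.choose 2 : ℝ) := by
    exact_mod_cast Nat.choose_pos hn
  have hF : (0 : ℝ) < (n.factorial : ℝ) := by
    exact_mod_cast n.factorial_pos
  have hfact : (n.factorial : ℝ) = (n.choose 2 : ℝ) * (2 * ((n - 2).factorial : ℝ)) := by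
    have h := Nat.choose_mul_factorial_mul_factorial hn
    calc (n.factorial : ℝ) = ((n.choose 2 * Nat.factorial 2 * (n - 2).factorial : ℕ) : ℝ) := by
          rw [h]
      _ = (n.choose 2 : ℝ) * (2 * ((n - 2).factorial : ℝ)) := by
          push_cast
          norm_num [Nat.factorial]
          ring
  rw [ge_iff_le]
  have h1 : (1 / (n.factorial : ℝ)) * T = T / n.factorial := by ring
  have h2 : (1 / (n.choose 2 : ℝ)) * R = R / (n.choose 2 : ℝ) := by ring
  rw [h1, h2, div_le_div_iff₀ hC hF]
  calc R * (n.factorial : ℝ) = (2 * ((n - 2).factorial : ℝ) * R) * (n.choose 2 : ℝ) := by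
        rw [hfact]; ring
    _ ≤ T * (n.choose 2 : ℝ) := mul_le_mul_of_nonneg_right hcore hC.le
end

section
/- For any integer n ≥ 4 and any x = (x_1, …, x_n) with all x_i ≥ 0 satisfying ∑_{i=1}^n x_i ≥ 6n, we have f_n(x) ≥ 5/6. -/
open Finset

/-- The `k`-th elementary symmetric polynomial `e_k(x)` in `n` variables. -/
noncomputable def Efun (n : ℕ) (k : ℕ) (x : Fin n → ℝ) : ℝ :=
  ∑ S ∈ (Finset.univ : Finset (Fin n)).powersetCard k, ∏ i ∈ S, x i

/-- `L_n(x) = (1/n!) ∑_{k=0}^n c_{n-k} e_k(x)`, where `c_j = numDerangements j`. -/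
noncomputable def Lfun (n : ℕ) (x : Fin n → ℝ) : ℝ :=
  (1 / (n.factorial : ℝ)) *
    ∑ k ∈ Finset.range (n + 1), (numDerangements (n - k) : ℝ) * Efun n k x

/-- `R_n(x) = (1/C(n,2)) ∑_{i<j} √(x_i x_j)`. -/
noncomputable def Rfun (n : ℕ) (x : Fin n → ℝ) : ℝ :=
  (1 / (n.choose 2 : ℝ)) *
    ∑ S ∈ (Finset.univ : Finset (Fin n)).powersetCard 2, Real.sqrt (∏ i ∈ S, x i)

/-- `f_n(x) = L_n(x) - R_n(x)`. -/
noncomputable def ffun (n : ℕ) (x : Fin n → ℝ) : ℝ := Lfun n x - Rfun n x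

lemma derangeFact : ∀ m, 2 ≤ m → m.factorial ≤ 3 * numDerangements m
  | 0, h => by omega
  | 1, h => by omega
  | 2, _ => by decide
  | 3, _ => by decide
  | (m+4), _ => by
    have h1 := derangeFact (m+2) (by omega)
    have h2 := derangeFact (m+3) (by omega)
    have hr := numDerangements_add_two (m+2)
    have hf : (m+4).factorial = (m+4) * ((m+3) * (m+2).factorial) := by
      rw [Nat.factorial_succ, Nat.factorial_succ]
    have hf3 : (m+3).factorial = (m+3) * (m+2).factorial := Nat.factorial_succ _
    rw [show m+4 = m+2+2 from rfl, hr]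
    rw [hf3] at h2
    nlinarith [Nat.zero_le (numDerangements (m+2))]

lemma Efun_nonneg (n k : ℕ) (x : Fin n → ℝ) (hx : ∀ i, 0 ≤ x i) : 0 ≤ Efun n k x :=
  Finset.sum_nonneg fun _ _ => Finset.prod_nonneg fun i _ => hx i

lemma Efun_zero (n : ℕ) (x : Fin n → ℝ) : Efun n 0 x = 1 := by
  simp [Efun, Finset.powersetCard_zero]

lemma Efun_one (n : ℕ) (x : Fin n → ℝ) : Efun n 1 x = ∑ i, x i := by
  simp [Efun, Finset.powersetCard_one, Finset.sum_map]

set_option maxHeartbeats 1000000 in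
/-- For `n ≥ 4` and nonnegative `x` with `∑ x_i ≥ 6n`, we have `f_n(x) ≥ 5/6`. -/
theorem f_ge_on_large_sum (n : ℕ) (hn : 4 ≤ n) (x : Fin n → ℝ) (hx : ∀ i, 0 ≤ x i)
    (hsum : (6 * n : ℝ) ≤ ∑ i, x i) :
    5 / 6 ≤ ffun n x := by
  obtain ⟨k, rfl⟩ : ∃ k, n = k + 4 := ⟨n - 4, by omega⟩
  have he2nn : 0 ≤ Efun (k+4) 2 x := Efun_nonneg (k+4) 2 x hx
  have hscast : (6:ℝ) * ((k:ℝ) + 4) ≤ ∑ i, x i := by push_cast at hsum; linarith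
  have hsnn : (0:ℝ) ≤ ∑ i, x i := le_trans (by positivity) hscast
  have hFpos : (0:ℝ) < ((k+4).factorial : ℝ) := by exact_mod_cast (k+4).factorial_pos
  have hCnat : (k+4).choose 2 * 2 = (k+4) * (k+3) := by
    rw [Nat.choose_two_right, show k+4-1 = k+3 from rfl]
    have h2 : 2 ∣ (k+4) * (k+3) := by
      have := Nat.even_mul_succ_self (k+3)
      rw [Nat.mul_comm] at this
      exact this.two_dvd
    rw [Nat.div_mul_cancel h2]
  have hC2 : (((k+4).choose 2 : ℕ) : ℝ) * 2 = ((k:ℝ)+4) * ((k:ℝ)+3) := by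
    exact_mod_cast congrArg (Nat.cast : ℕ → ℝ) hCnat
  have hCpos : (0:ℝ) < (((k+4).choose 2 : ℕ) : ℝ) := by nlinarith
  -- bound on R
  have hRsum : ∑ S ∈ (Finset.univ : Finset (Fin (k+4))).powersetCard 2,
      Real.sqrt (∏ i ∈ S, x i) ≤ Efun (k+4) 2 x / 6 + 3 / 2 * (((k+4).choose 2 : ℕ) : ℝ) := by
    have hcard : ((Finset.univ : Finset (Fin (k+4))).powersetCard 2).card = (k+4).choose 2 := by
      simp [Finset.card_powersetCard]
    calc ∑ S ∈ (Finset.univ : Finset (Fin (k+4))).powersetCard 2, Real.sqrt (∏ i ∈ S, x i)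
        ≤ ∑ S ∈ (Finset.univ : Finset (Fin (k+4))).powersetCard 2, ((∏ i ∈ S, x i) / 6 + 3 / 2) := by
          apply Finset.sum_le_sum
          intro S _
          have ht : (0:ℝ) ≤ ∏ i ∈ S, x i := Finset.prod_nonneg fun i _ => hx i
          have hsq := Real.sq_sqrt ht
          nlinarith [Real.sqrt_nonneg (∏ i ∈ S, x i), sq_nonneg (Real.sqrt (∏ i ∈ S, x i) - 3)]
      _ = Efun (k+4) 2 x / 6 + 3 / 2 * (((k+4).choose 2 : ℕ) : ℝ) := by
          rw [Finset.sum_add_distrib, ← Finset.sum_div, Finset.sum_const, hcard, Efun,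
            nsmul_eq_mul]
          ring
  have hR : Rfun (k+4) x ≤ Efun (k+4) 2 x / (6 * (((k+4).choose 2 : ℕ) : ℝ)) + 3 / 2 := by
    unfold Rfun
    rw [div_mul_eq_mul_div, one_mul, div_le_iff₀ hCpos]
    calc ∑ S ∈ (Finset.univ : Finset (Fin (k+4))).powersetCard 2, Real.sqrt (∏ i ∈ S, x i)
        ≤ Efun (k+4) 2 x / 6 + 3 / 2 * (((k+4).choose 2 : ℕ) : ℝ) := hRsum
      _ = (Efun (k+4) 2 x / (6 * (((k+4).choose 2 : ℕ) : ℝ)) + 3 / 2) * (((k+4).choose 2 : ℕ) : ℝ) := by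
          field_simp
  -- lower bound on L
  have hLsum : (numDerangements (k+4) : ℝ) * 1
      + (numDerangements (k+3) : ℝ) * (∑ i, x i)
      + (numDerangements (k+2) : ℝ) * Efun (k+4) 2 x
      ≤ ∑ j ∈ Finset.range (k+4 + 1), (numDerangements (k+4 - j) : ℝ) * Efun (k+4) j x := by
    have hsub : ({0, 1, 2} : Finset ℕ) ⊆ Finset.range (k+4 + 1) := by
      intro a ha; simp at ha; rcases ha with rfl | rfl | rfl <;> simp
    have h := Finset.sum_le_sum_of_subset_of_nonneg hsub
      (f := fun j => (numDerangements (k+4 - j) : ℝ) * Efun (k+4) j x)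
      (fun j _ _ => mul_nonneg (by positivity) (Efun_nonneg (k+4) j x hx))
    have hss : ∑ j ∈ ({0, 1, 2} : Finset ℕ), (numDerangements (k+4 - j) : ℝ) * Efun (k+4) j x
        = (numDerangements (k+4) : ℝ) * 1
          + (numDerangements (k+3) : ℝ) * (∑ i, x i)
          + (numDerangements (k+2) : ℝ) * Efun (k+4) 2 x := by
      rw [show ({0,1,2} : Finset ℕ) = insert 0 (insert 1 {2}) from rfl,
        Finset.sum_insert (by decide), Finset.sum_insert (by decide), Finset.sum_singleton,
        Nat.sub_zero, show k+4-1 = k+3 from rfl, show k+4-2 = k+2 from rfl,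
        Efun_zero, Efun_one]
      ring
    rw [hss] at h
    exact h
  have hL : ((numDerangements (k+4) : ℝ) + (numDerangements (k+3) : ℝ) * (∑ i, x i)
      + (numDerangements (k+2) : ℝ) * Efun (k+4) 2 x) / ((k+4).factorial : ℝ)
      ≤ Lfun (k+4) x := by
    unfold Lfun
    rw [div_eq_mul_inv, ← one_div, mul_comm]
    apply mul_le_mul_of_nonneg_left _ (by positivity)
    linarith
  -- derangement bounds
  have hd0 : ((k+4).factorial : ℝ) ≤ 3 * (numDerangements (k+4) : ℝ) := by
    exact_mod_cast derangeFact (k+4) (by omega)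
  have hd1 : ((k+3).factorial : ℝ) ≤ 3 * (numDerangements (k+3) : ℝ) := by
    exact_mod_cast derangeFact (k+3) (by omega)
  have hd2 : ((k+2).factorial : ℝ) ≤ 3 * (numDerangements (k+2) : ℝ) := by
    exact_mod_cast derangeFact (k+2) (by omega)
  have hfac : ((k+4).factorial : ℝ) = ((k:ℝ)+4) * (((k:ℝ)+3) * ((k+2).factorial : ℝ)) := by
    have : (k+4).factorial = (k+4) * ((k+3) * (k+2).factorial) := by
      rw [Nat.factorial_succ, Nat.factorial_succ]
    rw [this]; push_cast; ring
  have hf2pos : (0:ℝ) < ((k+2).factorial : ℝ) := by exact_mod_cast (k+2).factorial_pos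
  -- three term bounds
  have ht0 : (1:ℝ)/3 ≤ (numDerangements (k+4) : ℝ) / ((k+4).factorial : ℝ) := by
    rw [le_div_iff₀ hFpos]; linarith
  have ht1 : (2:ℝ) ≤ (numDerangements (k+3) : ℝ) * (∑ i, x i) / ((k+4).factorial : ℝ) := by
    rw [le_div_iff₀ hFpos, hfac]
    have hdn : ((k+3).factorial : ℝ) ≤ 3 * (numDerangements (k+3) : ℝ) := hd1
    have hfac3 : ((k+3).factorial : ℝ) = ((k:ℝ)+3) * ((k+2).factorial : ℝ) := by
      rw [Nat.factorial_succ]; push_cast; ring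
    rw [hfac3] at hdn
    have hdnn : (0:ℝ) ≤ (numDerangements (k+3) : ℝ) := by positivity
    nlinarith [mul_nonneg hdnn hsnn, mul_le_mul_of_nonneg_right hscast hdnn]
  have ht2 : Efun (k+4) 2 x / (6 * (((k+4).choose 2 : ℕ) : ℝ))
      ≤ (numDerangements (k+2) : ℝ) * Efun (k+4) 2 x / ((k+4).factorial : ℝ) := by
    rw [div_le_div_iff₀ (by positivity) hFpos, hfac]
    calc Efun (k+4) 2 x * (((k:ℝ)+4) * (((k:ℝ)+3) * ((k+2).factorial : ℝ)))
        = ((k+2).factorial : ℝ) * Efun (k+4) 2 x * (((k:ℝ)+4) * ((k:ℝ)+3)) := by ring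
      _ ≤ 3 * (numDerangements (k+2) : ℝ) * Efun (k+4) 2 x * (((k:ℝ)+4) * ((k:ℝ)+3)) := by
          apply mul_le_mul_of_nonneg_right _ (by positivity)
          exact mul_le_mul_of_nonneg_right hd2 he2nn
      _ = (numDerangements (k+2) : ℝ) * Efun (k+4) 2 x * (6 * (((k+4).choose 2 : ℕ) : ℝ)) := by
          linear_combination (-3 * (numDerangements (k+2) : ℝ) * Efun (k+4) 2 x) * hC2
  have heq : (numDerangements (k+4) : ℝ) / ((k+4).factorial : ℝ)
      + (numDerangements (k+3) : ℝ) * (∑ i, x i) / ((k+4).factorial : ℝ)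
      + (numDerangements (k+2) : ℝ) * Efun (k+4) 2 x / ((k+4).factorial : ℝ)
      = ((numDerangements (k+4) : ℝ) + (numDerangements (k+3) : ℝ) * (∑ i, x i)
        + (numDerangements (k+2) : ℝ) * Efun (k+4) 2 x) / ((k+4).factorial : ℝ) := by ring
  unfold ffun
  linarith [hR, hL, ht0, ht1, ht2, heq]
end

section
/- For any integer n ≥ 4, the function f_n(x) is non-negative for all x ∈ ℝ_{≥0}^n if and only if it is non-negative for all x in the compact set C = {x = (x_1,…,x_n) : x_1 ≥ 0, …, x_n ≥ 0 and ∑_{i=1}^n x_i ≤ 6n}. -/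
set_option maxHeartbeats 1000000


open Finset

/-- `3 · c_{m+2} ≥ (m+2)!` -/
lemma derange_fac : ∀ m, Nat.factorial (m+2) ≤ 3 * numDerangements (m+2) := by
  have key : ∀ m, Nat.factorial (m+2) ≤ 3 * numDerangements (m+2) ∧
      Nat.factorial (m+3) ≤ 3 * numDerangements (m+3) := by
    intro m
    induction m with
    | zero => simp [numDerangements_add_two]; decide
    | succ k ih =>
      refine ⟨ih.2, ?_⟩
      have h := numDerangements_add_two (k+2)
      have hfac : Nat.factorial (k+4) = (k+3) * (Nat.factorial (k+2) + Nat.factorial (k+3)) := by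
        simp [Nat.factorial]; ring
      rw [show k+1+3 = k+4 from rfl, hfac, show k+2+2 = k+4 from rfl] at *
      rw [h]
      have := ih.1; have := ih.2
      nlinarith
  exact fun m => (key m).1

/-- For `n ≥ 4`, `f_n` is non-negative on all of `ℝ_{≥0}^n` if and only if it is
non-negative on the compact set `C = {x : xᵢ ≥ 0, ∑ xᵢ ≤ 6n}`. -/
theorem f_nonneg_iff_nonneg_on_compact (n : ℕ) (hn : 4 ≤ n) :
    (∀ x : Fin n → ℝ, (∀ i, 0 ≤ x i) → 0 ≤ ffun n x) ↔
      (∀ x : Fin n → ℝ, (∀ i, 0 ≤ x i) → (∑ i, x i) ≤ 6 * n → 0 ≤ ffun n x) := by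
  constructor
  · exact fun h x hx _ => h x hx
  intro h
  obtain ⟨m, rfl⟩ : ∃ m, n = m + 4 := ⟨n - 4, by omega⟩
  set n := m + 4 with hndef
  intro x hx
  by_cases hs : (∑ i, x i) ≤ 6 * n
  · exact h x hx hs
  push_neg at hs
  clear h
  -- basic nonnegativity of the elementary symmetric polynomials
  have hE : ∀ k, 0 ≤ Efun n k x := fun k =>
    Finset.sum_nonneg fun S _ => Finset.prod_nonneg fun i _ => hx i
  have hE1 : Efun n 1 x = ∑ i, x i := by
    unfold Efun
    rw [Finset.powersetCard_one, Finset.sum_map]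
    simp
  -- abbreviations
  set E1 := Efun n 1 x with hE1def
  set E2 := Efun n 2 x with hE2def
  set a := ((numDerangements (m+3) : ℕ) : ℝ) with ha
  set b := ((numDerangements (m+2) : ℕ) : ℝ) with hb
  set F := ((n.factorial : ℕ) : ℝ) with hF
  set C2 := ((n.choose 2 : ℕ) : ℝ) with hC2
  have hFpos : (0:ℝ) < F := by positivity
  have hC2pos : (0:ℝ) < C2 := by
    have h0 : 0 < n.choose 2 := Nat.choose_pos (by omega)
    rw [hC2]; exact_mod_cast h0
  have ha0 : 0 ≤ a := by positivity
  have hb0 : 0 ≤ b := by positivity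
  -- key numeric facts
  have hFval : F = ((m:ℝ)+4) * ((m:ℝ)+3) * ((m+2).factorial : ℝ) := by
    have : n.factorial = (m+4) * ((m+3) * (m+2).factorial) := by
      simp [hndef, Nat.factorial_succ]
    rw [hF, this]
    push_cast
    ring
  have hC2val : 2 * C2 = ((m:ℝ)+4) * ((m:ℝ)+3) := by
    have heven : Even ((m+4) * (m+3)) := by
      rcases Nat.even_or_odd m with he | ho
      · exact (he.add (by decide)).mul_right _
      · exact (Even.mul_left (ho.add_odd (by decide)) _)
    have h2 : 2 * (n.choose 2) = (m+4) * (m+3) := by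
      rw [Nat.choose_two_right]
      have : n * (n - 1) = (m+4) * (m+3) := by simp [hndef]
      rw [this, Nat.mul_div_cancel' heven.two_dvd]
    rw [hC2]
    exact_mod_cast h2
  have hfa : ((m+3).factorial : ℝ) ≤ 3 * a := by
    have := derange_fac (m+1)
    rw [show m+1+2 = m+3 from rfl] at this
    rw [ha]; exact_mod_cast this
  have hfb : ((m+2).factorial : ℝ) ≤ 3 * b := by
    have := derange_fac m
    rw [hb]; exact_mod_cast this
  have hfacpos : (0:ℝ) < ((m+2).factorial : ℝ) := by positivity
  have hFa : F ≤ 3 * a * ((m:ℝ)+4) := by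
    have h1 : ((m+3).factorial : ℝ) = ((m:ℝ)+3) * ((m+2).factorial : ℝ) := by
      have : (m+3).factorial = (m+3) * (m+2).factorial := by simp [Nat.factorial_succ]
      rw [this]; push_cast; ring
    rw [hFval]
    nlinarith [hfa, hfacpos.le]
  have hFb : F ≤ 6 * C2 * b := by
    rw [hFval]
    nlinarith [hfb, hC2val]
  -- lower bound on L
  have hsum : (numDerangements (n-1) : ℝ) * Efun n 1 x + (numDerangements (n-2) : ℝ) * Efun n 2 x
      ≤ ∑ k ∈ Finset.range (n + 1), (numDerangements (n - k) : ℝ) * Efun n k x := by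
    have hsub : ({1, 2} : Finset ℕ) ⊆ Finset.range (n+1) := by
      intro k hk
      simp only [Finset.mem_insert, Finset.mem_singleton] at hk
      rcases hk with rfl | rfl <;> simp [hndef] <;> omega
    have := Finset.sum_le_sum_of_subset_of_nonneg (f := fun k => (numDerangements (n - k) : ℝ) * Efun n k x) hsub
      (fun k _ _ => mul_nonneg (Nat.cast_nonneg _) (hE k))
    rwa [Finset.sum_pair (by norm_num : (1:ℕ) ≠ 2)] at this
  have hn1 : n - 1 = m + 3 := by omega
  have hn2 : n - 2 = m + 2 := by omega
  have hL : (a * E1 + b * E2) / F ≤ Lfun n x := by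
    rw [hn1, hn2] at hsum
    unfold Lfun
    rw [div_eq_mul_inv, one_div, mul_comm (a * E1 + b * E2)]
    exact mul_le_mul_of_nonneg_left hsum (by positivity)
  -- upper bound on R
  have hsqrt : ∀ y : ℝ, 0 ≤ y → Real.sqrt y ≤ y / 6 + 3 / 2 := by
    intro y hy
    nlinarith [Real.sq_sqrt hy, Real.sqrt_nonneg y, sq_nonneg (Real.sqrt y - 3)]
  have hRsum : ∑ S ∈ (Finset.univ : Finset (Fin n)).powersetCard 2, Real.sqrt (∏ i ∈ S, x i)
      ≤ E2 / 6 + C2 * (3/2) := by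
    have hcard : ((Finset.univ : Finset (Fin n)).powersetCard 2).card = n.choose 2 := by
      rw [Finset.card_powersetCard, Finset.card_univ, Fintype.card_fin]
    calc ∑ S ∈ (Finset.univ : Finset (Fin n)).powersetCard 2, Real.sqrt (∏ i ∈ S, x i)
        ≤ ∑ S ∈ (Finset.univ : Finset (Fin n)).powersetCard 2, ((∏ i ∈ S, x i) / 6 + 3/2) :=
          Finset.sum_le_sum fun S _ =>
            hsqrt _ (Finset.prod_nonneg fun i _ => hx i)
      _ = E2 / 6 + C2 * (3/2) := by
          rw [Finset.sum_add_distrib, ← Finset.sum_div, Finset.sum_const, hcard]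
          rw [hE2def]
          unfold Efun
          rw [hC2]
          ring
  have hR : Rfun n x ≤ E2 / (6 * C2) + 3/2 := by
    unfold Rfun
    rw [← hC2]
    calc (1 / C2) * ∑ S ∈ (Finset.univ : Finset (Fin n)).powersetCard 2,
            Real.sqrt (∏ i ∈ S, x i)
        ≤ (1 / C2) * (E2 / 6 + C2 * (3/2)) :=
          mul_le_mul_of_nonneg_left hRsum (by positivity)
      _ = E2 / (6 * C2) + 3/2 := by field_simp
  -- combine
  have hE1big : 6 * ((m:ℝ)+4) < E1 := by
    rw [hE1]
    calc 6 * ((m:ℝ)+4) = 6 * (n:ℝ) := by push_cast [hndef]; ring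
      _ < ∑ i, x i := hs
  have h1 : 2 * F ≤ a * E1 := by nlinarith [hFa, ha0, hE1big]
  have h2 : E2 / (6 * C2) ≤ b * E2 / F := by
    rw [div_le_div_iff₀ (by positivity) hFpos]
    nlinarith [hFb, hE 2, hb0]
  have h3 : (2:ℝ) ≤ a * E1 / F := by
    rw [le_div_iff₀ hFpos]; linarith
  have hfin : E2 / (6 * C2) + 3/2 ≤ (a * E1 + b * E2) / F := by
    rw [add_div]
    linarith
  unfold ffun
  linarith
end

section
/- For any integer n ≥ 2 and any x = (x_1, …, x_n) with x_i > 1 for every i ∈ [n], every partial derivative ∂f_n/∂x_i is strictly positive at x; in particular, f_n has no critical points in the open region (1, ∞)^n. -/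
open Finset

/-- Sum over `(k+1)`-subsets of `insert i U` of terms vanishing when `i ∉ S`. -/
lemma sum_ite_powersetCard_insert {α : Type*} [DecidableEq α] {U : Finset α} {i : α}
    (hi : i ∉ U) (k : ℕ) (f : Finset α → ℝ) :
    ∑ S ∈ (insert i U).powersetCard (k + 1), (if i ∈ S then f S else 0)
      = ∑ T ∈ U.powersetCard k, f (insert i T) := by
  rw [Finset.powersetCard_succ_insert hi]
  have hdisj : Disjoint (U.powersetCard (k + 1)) ((U.powersetCard k).image (insert i)) := by
    rw [Finset.disjoint_left]
    intro S hS hS'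
    obtain ⟨T, hT, rfl⟩ := Finset.mem_image.mp hS'
    exact hi ((Finset.mem_powersetCard.mp hS).1 (Finset.mem_insert_self i T))
  rw [Finset.sum_union hdisj]
  have h1 : ∑ S ∈ U.powersetCard (k + 1), (if i ∈ S then f S else 0) = 0 :=
    Finset.sum_eq_zero fun S hS =>
      if_neg fun h => hi ((Finset.mem_powersetCard.mp hS).1 h)
  have h2 : ∀ T1 ∈ U.powersetCard k, ∀ T2 ∈ U.powersetCard k,
      insert i T1 = insert i T2 → T1 = T2 := by
    intro T1 hT1 T2 hT2 h
    have hi1 : i ∉ T1 := fun h' => hi ((Finset.mem_powersetCard.mp hT1).1 h')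
    have hi2 : i ∉ T2 := fun h' => hi ((Finset.mem_powersetCard.mp hT2).1 h')
    rw [← Finset.erase_insert hi1, h, Finset.erase_insert hi2]
  rw [h1, zero_add, Finset.sum_image h2]
  exact Finset.sum_congr rfl fun T _ => if_pos (Finset.mem_insert_self i T)

/-- `∏ (1 + aⱼ) ≥ 1 + ∑ aⱼ` version: for `yⱼ ≥ 1`. -/
lemma one_add_sum_le_prod' {α : Type*} (T : Finset α) (y : α → ℝ) (hy : ∀ j ∈ T, 1 ≤ y j) :
    1 + ∑ j ∈ T, (y j - 1) ≤ ∏ j ∈ T, y j := by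
  induction T using Finset.cons_induction with
  | empty => simp
  | cons a T ha ih =>
    rw [Finset.sum_cons, Finset.prod_cons]
    have ha1 : 1 ≤ y a := hy a (Finset.mem_cons_self a T)
    have ih' := ih fun j hj => hy j (Finset.mem_cons.mpr (Or.inr hj))
    have hs : 0 ≤ ∑ j ∈ T, (y j - 1) := Finset.sum_nonneg fun j hj => by
      linarith [hy j (Finset.mem_cons.mpr (Or.inr hj))]
    nlinarith

/-- key derangement identity pair. -/
lemma derangements_identity (n : ℕ) :
    (∑ k ∈ Finset.range (n + 1), (n.choose k : ℤ) * numDerangements k) = n.factorial ∧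
    (∑ k ∈ Finset.range (n + 1), (n.choose k : ℤ) * numDerangements (k + 1))
      = n * n.factorial := by
  induction n with
  | zero => simp
  | succ n ih =>
    obtain ⟨hG, hQ⟩ := ih
    have split : ∀ f : ℕ → ℤ, ∑ k ∈ Finset.range (n + 2), ((n + 1).choose k : ℤ) * f k
        = ∑ k ∈ Finset.range (n + 1), (n.choose k : ℤ) * f k
          + ∑ k ∈ Finset.range (n + 1), (n.choose k : ℤ) * f (k + 1) := by
      intro f
      rw [Finset.sum_range_succ' (fun k => ((n + 1).choose k : ℤ) * f k)]
      have : ∀ k, ((n + 1).choose (k + 1) : ℤ) = (n.choose k : ℤ) + (n.choose (k + 1) : ℤ) := by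
        intro k; rw [Nat.choose_succ_succ]; push_cast; ring
      simp only [this, add_mul]
      rw [Finset.sum_add_distrib]
      have h3 : ∑ k ∈ Finset.range (n + 1), (n.choose (k + 1) : ℤ) * f (k + 1)
          + ((n + 1).choose 0 : ℤ) * f 0
          = ∑ k ∈ Finset.range (n + 1), (n.choose k : ℤ) * f k := by
        rw [show ((n+1).choose 0 : ℤ) = (n.choose 0 : ℤ) by simp]
        rw [← Finset.sum_range_succ' (fun k => (n.choose k : ℤ) * f k)]
        rw [Finset.sum_range_succ]
        simp [Nat.choose_succ_self]
      linarith [h3]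
    have hG' : (∑ k ∈ Finset.range (n + 2), ((n + 1).choose k : ℤ) * numDerangements k)
        = (n + 1).factorial := by
      rw [split, hG, hQ]
      have : ((n + 1).factorial : ℤ) = (n + 1) * n.factorial := by
        exact_mod_cast Nat.factorial_succ n
      rw [this]; ring
    refine ⟨hG', ?_⟩
    have hrec : ∀ k : ℕ, (numDerangements (k + 1) : ℤ)
        = (k + 1) * (numDerangements k : ℤ) - (-1) ^ k := numDerangements_succ
    calc ∑ k ∈ Finset.range (n + 2), ((n + 1).choose k : ℤ) * numDerangements (k + 1)
        = ∑ k ∈ Finset.range (n + 2), (((n + 1).choose k : ℤ) * numDerangements k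
            + k * (n + 1).choose k * numDerangements k
            - (-1) ^ k * (n + 1).choose k) := by
          refine Finset.sum_congr rfl fun k _ => ?_
          rw [hrec k]; ring
      _ = (n + 1).factorial
            + ∑ k ∈ Finset.range (n + 2), (k * (n + 1).choose k : ℤ) * numDerangements k
            - 0 := by
          rw [Finset.sum_sub_distrib, Finset.sum_add_distrib, hG',
            Int.alternating_sum_range_choose_of_ne (n := n + 1) (by omega)]
      _ = ((n + 1) : ℤ) * (n + 1).factorial := by
          have hshift : ∑ k ∈ Finset.range (n + 2), (k * (n + 1).choose k : ℤ) * numDerangements k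
              = (n + 1) * ∑ k ∈ Finset.range (n + 1), (n.choose k : ℤ) * numDerangements (k + 1) := by
            rw [Finset.sum_range_succ' (fun k => (k * (n + 1).choose k : ℤ) * numDerangements k)]
            simp only [Nat.cast_zero, zero_mul, mul_zero, add_zero]
            rw [Finset.mul_sum]
            refine Finset.sum_congr rfl fun k _ => ?_
            have h := Nat.add_one_mul_choose_eq n k
            have h' : ((n + 1) * n.choose k : ℤ) = ((n + 1).choose (k + 1) : ℤ) * (k + 1) := by
              exact_mod_cast congrArg (Nat.cast : ℕ → ℤ) h
            push_cast
            push_cast at h'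
            nlinarith [h']
          rw [hshift, hQ, Nat.factorial_succ]
          push_cast; ring

/-- Reflected real version: `∑_{k=0}^N c_{N-k} C(N,k) = N!`. -/
lemma key_id (N : ℕ) :
    ∑ k ∈ Finset.range (N + 1), (numDerangements (N - k) : ℝ) * (N.choose k : ℝ)
      = (N.factorial : ℝ) := by
  have h := (derangements_identity N).1
  have href : ∑ k ∈ Finset.range (N + 1), (N.choose (N - k) : ℤ) * numDerangements (N - k)
      = ∑ k ∈ Finset.range (N + 1), (N.choose k : ℤ) * numDerangements k :=
    Finset.sum_range_reflect (fun k => (N.choose k : ℤ) * numDerangements k) (N + 1)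
  have h2 : ∑ k ∈ Finset.range (N + 1), (N.choose k : ℤ) * numDerangements (N - k)
      = (N.factorial : ℤ) := by
    rw [← h, ← href]
    refine Finset.sum_congr rfl fun k hk => ?_
    have hkN : k ≤ N := Nat.lt_succ_iff.mp (Finset.mem_range.mp hk)
    rw [Nat.choose_symm hkN]
  have := congrArg (Int.cast : ℤ → ℝ) h2
  push_cast at this
  rw [← this]
  exact Finset.sum_congr rfl fun k _ => by ring

/-- Lower bound for the elementary symmetric sum when all variables are `≥ 1`. -/
lemma esymm_lower {α : Type*} [DecidableEq α] (U : Finset α) (y : α → ℝ)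
    (hy : ∀ j ∈ U, 1 ≤ y j) (k : ℕ) :
    ((U.powersetCard k).card : ℝ)
      + ∑ j ∈ U, (y j - 1) * (((U.powersetCard k).filter (fun T => j ∈ T)).card : ℝ)
      ≤ ∑ T ∈ U.powersetCard k, ∏ j ∈ T, y j := by
  have h1 : ∀ T ∈ U.powersetCard k, 1 + ∑ j ∈ T, (y j - 1) ≤ ∏ j ∈ T, y j := fun T hT =>
    one_add_sum_le_prod' T y fun j hj => hy j ((Finset.mem_powersetCard.mp hT).1 hj)
  have h2 : ((U.powersetCard k).card : ℝ)
      + ∑ j ∈ U, (y j - 1) * (((U.powersetCard k).filter (fun T => j ∈ T)).card : ℝ)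
      = ∑ T ∈ U.powersetCard k, (1 + ∑ j ∈ T, (y j - 1)) := by
    rw [Finset.sum_add_distrib, Finset.sum_const, nsmul_eq_mul, mul_one]
    congr 1
    have hin : ∀ T ∈ U.powersetCard k, ∑ j ∈ T, (y j - 1)
        = ∑ j ∈ U, if j ∈ T then y j - 1 else 0 := by
      intro T hT
      rw [← Finset.sum_filter]
      congr 1
      rw [Finset.filter_mem_eq_inter]
      exact (Finset.inter_eq_right.mpr (Finset.mem_powersetCard.mp hT).1).symm
    rw [Finset.sum_congr rfl hin, Finset.sum_comm]
    refine Finset.sum_congr rfl fun j _ => ?_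
    rw [← Finset.sum_filter, Finset.sum_const, nsmul_eq_mul, mul_comm]
  rw [h2]
  exact Finset.sum_le_sum h1

/-- Number of `(k+1)`-subsets of `U` containing a fixed `j ∈ U`. -/
lemma card_filter_mem_powersetCard {α : Type*} [DecidableEq α] (U : Finset α) (j : α)
    (hj : j ∈ U) (k : ℕ) :
    ((((U.powersetCard (k + 1)).filter (fun T => j ∈ T)).card : ℝ))
      = ((U.erase j).card.choose k : ℝ) := by
  have h := sum_ite_powersetCard_insert (U := U.erase j) (i := j)
    (Finset.notMem_erase j U) k (fun _ => (1 : ℝ))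
  rw [Finset.insert_erase hj] at h
  have hL : ∑ S ∈ U.powersetCard (k + 1), (if j ∈ S then (1 : ℝ) else 0)
      = (((U.powersetCard (k + 1)).filter (fun T => j ∈ T)).card : ℝ) := by
    rw [Finset.sum_boole]
  have hR : ∑ _T ∈ (U.erase j).powersetCard k, (1 : ℝ)
      = ((U.erase j).card.choose k : ℝ) := by
    rw [Finset.sum_const, Finset.card_powersetCard, nsmul_eq_mul, mul_one]
  rw [hL, hR] at h
  exact h

/-- For `n ≥ 2` and `x` with every coordinate `> 1`, every partial derivative
`∂f_n/∂x_i` exists and is strictly positive at `x`; in particular `f_n` has no critical point in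
the open region `(1, ∞)^n`. -/
theorem no_critical_points_above_one (n : ℕ) (hn : 2 ≤ n) (x : Fin n → ℝ)
    (hx : ∀ i, 1 < x i) (i : Fin n) :
    ∃ d : ℝ, HasDerivAt (fun t => ffun n (Function.update x i t)) d (x i) ∧ 0 < d := by
  obtain ⟨m, rfl⟩ : ∃ m, n = m + 2 := ⟨n - 2, by omega⟩
  clear hn
  have hx0 : ∀ j, (0 : ℝ) < x j := fun j => lt_trans one_pos (hx j)
  set P : Finset (Fin (m + 2)) → ℝ := fun S => ∏ j ∈ S.erase i, x j with hPdef
  have hPpos : ∀ S, 0 < P S := fun S => Finset.prod_pos fun j _ => hx0 j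
  -- rewriting products under update
  have hprod : ∀ (S : Finset (Fin (m + 2))), i ∈ S → ∀ t : ℝ,
      ∏ j ∈ S, Function.update x i t j = t * P S := by
    intro S hiS t
    rw [← Finset.mul_prod_erase S _ hiS, Function.update_self]
    congr 1
    exact Finset.prod_congr rfl fun j hj =>
      Function.update_of_ne (Finset.ne_of_mem_erase hj) _ _
  have hprodn : ∀ (S : Finset (Fin (m + 2))), i ∉ S → ∀ t : ℝ,
      ∏ j ∈ S, Function.update x i t j = ∏ j ∈ S, x j := by
    intro S hiS t
    refine Finset.prod_congr rfl fun j hj => ?_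
    have hji : j ≠ i := fun h => hiS (h ▸ hj)
    exact Function.update_of_ne hji _ _
  -- derivative of each elementary symmetric polynomial
  have hE : ∀ k : ℕ, HasDerivAt (fun t => Efun (m + 2) k (Function.update x i t))
      (∑ S ∈ (Finset.univ : Finset (Fin (m + 2))).powersetCard k,
        if i ∈ S then P S else 0) (x i) := by
    intro k
    simp only [Efun]
    apply HasDerivAt.fun_sum
    intro S _
    by_cases hiS : i ∈ S
    · simp only [hiS, if_pos]
      have heq : (fun t => ∏ j ∈ S, Function.update x i t j)
          = fun t => t * P S := funext fun t => hprod S hiS t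
      rw [heq]
      exact hasDerivAt_mul_const _
    · simp only [hiS, if_neg, not_false_iff]
      have heq : (fun t => ∏ j ∈ S, Function.update x i t j)
          = fun _ => ∏ j ∈ S, x j := funext fun t => hprodn S hiS t
      rw [heq]
      exact hasDerivAt_const _ _
  -- derivative of the sqrt sum
  have hRsum : HasDerivAt
      (fun t => ∑ S ∈ (Finset.univ : Finset (Fin (m + 2))).powersetCard 2,
        Real.sqrt (∏ j ∈ S, Function.update x i t j))
      (∑ S ∈ (Finset.univ : Finset (Fin (m + 2))).powersetCard 2,
        if i ∈ S then P S / (2 * Real.sqrt (x i * P S)) else 0) (x i) := by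
    apply HasDerivAt.fun_sum
    intro S _
    by_cases hiS : i ∈ S
    · simp only [hiS, if_pos]
      have heq : (fun t => Real.sqrt (∏ j ∈ S, Function.update x i t j))
          = fun t => Real.sqrt (t * P S) := funext fun t => by rw [hprod S hiS t]
      rw [heq]
      have h0 : x i * P S ≠ 0 := ne_of_gt (mul_pos (hx0 i) (hPpos S))
      exact (hasDerivAt_mul_const (P S)).sqrt h0
    · simp only [hiS, if_neg, not_false_iff]
      have heq : (fun t => Real.sqrt (∏ j ∈ S, Function.update x i t j))
          = fun _ => Real.sqrt (∏ j ∈ S, x j) := funext fun t => by rw [hprodn S hiS t]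
      rw [heq]
      exact hasDerivAt_const _ _
  -- the derivative value
  set D : ℕ → ℝ := fun k => ∑ S ∈ (Finset.univ : Finset (Fin (m + 2))).powersetCard k,
    if i ∈ S then P S else 0 with hDdef
  set SR : ℝ := ∑ S ∈ (Finset.univ : Finset (Fin (m + 2))).powersetCard 2,
    if i ∈ S then P S / (2 * Real.sqrt (x i * P S)) else 0 with hSRdef
  set S1 : ℝ := ∑ k ∈ Finset.range (m + 2 + 1),
    (numDerangements (m + 2 - k) : ℝ) * D k with hS1def
  refine ⟨(1 / ((m + 2).factorial : ℝ)) * S1 - (1 / ((m + 2).choose 2 : ℝ)) * SR, ?_, ?_⟩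
  · -- HasDerivAt
    have hL : HasDerivAt (fun t => Lfun (m + 2) (Function.update x i t))
        ((1 / ((m + 2).factorial : ℝ)) * S1) (x i) := by
      simp only [Lfun, hS1def, hDdef]
      exact (HasDerivAt.fun_sum fun k _ => (hE k).const_mul _).const_mul _
    have hRf : HasDerivAt (fun t => Rfun (m + 2) (Function.update x i t))
        ((1 / ((m + 2).choose 2 : ℝ)) * SR) (x i) := by
      simp only [Rfun, hSRdef]
      exact hRsum.const_mul _
    simpa only [ffun] using hL.fun_sub hRf
  · -- positivity
    set U : Finset (Fin (m + 2)) := Finset.univ.erase i with hUdef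
    have hiU : i ∉ U := Finset.notMem_erase i Finset.univ
    have hins : insert i U = Finset.univ := Finset.insert_erase (Finset.mem_univ i)
    have hcardU : U.card = m + 1 := by
      rw [hUdef, Finset.card_erase_of_mem (Finset.mem_univ i), Finset.card_univ,
        Fintype.card_fin]
      omega
    set Sv : ℝ := ∑ j ∈ U, (x j - 1) with hSvdef
    have hSv : 0 ≤ Sv := Finset.sum_nonneg fun j _ => by linarith [hx j]
    -- rewrite D (k+1) as a sum over k-subsets of U
    have hDsucc : ∀ k : ℕ, D (k + 1) = ∑ T ∈ U.powersetCard k, ∏ j ∈ T, x j := by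
      intro k
      have hrfl : D (k + 1) = ∑ S ∈ (Finset.univ : Finset (Fin (m + 2))).powersetCard (k + 1),
          if i ∈ S then P S else 0 := rfl
      rw [hrfl, ← hins, sum_ite_powersetCard_insert hiU]
      refine Finset.sum_congr rfl fun T hT => ?_
      have hiT : i ∉ T := fun h => hiU ((Finset.mem_powersetCard.mp hT).1 h)
      simp only [hPdef]
      rw [Finset.erase_insert hiT]
    -- lower bound for D (k+1)
    have hDlb : ∀ k : ℕ,
        (((m + 1).choose k : ℝ) + Sv * (if k = 0 then 0 else (m.choose (k - 1) : ℝ)))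
          ≤ D (k + 1) := by
      intro k
      rw [hDsucc k]
      have hylb := esymm_lower U x (fun j _ => le_of_lt (hx j)) k
      have hcardpc : ((U.powersetCard k).card : ℝ) = ((m + 1).choose k : ℝ) := by
        rw [Finset.card_powersetCard, hcardU]
      have hcnt : ∀ j ∈ U, (((U.powersetCard k).filter (fun T => j ∈ T)).card : ℝ)
          = (if k = 0 then 0 else (m.choose (k - 1) : ℝ)) := by
        intro j hj
        rcases k with _ | k'
        · simp only [if_pos rfl]
          rw [Finset.powersetCard_zero]
          simp [Finset.filter_singleton]
        · simp only [Nat.succ_ne_zero, if_neg, not_false_iff]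
          rw [card_filter_mem_powersetCard U j hj k']
          congr 2
          rw [Finset.card_erase_of_mem hj, hcardU]
          omega
      calc ((m + 1).choose k : ℝ) + Sv * (if k = 0 then 0 else (m.choose (k - 1) : ℝ))
          = ((U.powersetCard k).card : ℝ)
            + ∑ j ∈ U, (x j - 1) * (((U.powersetCard k).filter (fun T => j ∈ T)).card : ℝ) := by
            rw [hcardpc, hSvdef, Finset.sum_mul]
            congr 1
            exact (Finset.sum_congr rfl fun j hj => by rw [hcnt j hj]).symm
        _ ≤ _ := hylb
    -- lower bound for S1
    have hS1lb : (((m + 1).factorial : ℝ) + Sv * (m.factorial : ℝ)) ≤ S1 := by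
      rw [hS1def, Finset.sum_range_succ']
      have hD0 : D 0 = 0 := by
        have hrfl : D 0 = ∑ S ∈ (Finset.univ : Finset (Fin (m + 2))).powersetCard 0,
            if i ∈ S then P S else 0 := rfl
        rw [hrfl, Finset.powersetCard_zero]
        simp
      rw [hD0, mul_zero, add_zero]
      have hstep : ∀ k ∈ Finset.range (m + 2),
          (numDerangements (m + 1 - k) : ℝ)
            * (((m + 1).choose k : ℝ) + Sv * (if k = 0 then 0 else (m.choose (k - 1) : ℝ)))
          ≤ (numDerangements (m + 2 - (k + 1)) : ℝ) * D (k + 1) := by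
        intro k _
        rw [show m + 2 - (k + 1) = m + 1 - k from by omega]
        exact mul_le_mul_of_nonneg_left (hDlb k) (Nat.cast_nonneg _)
      have hsum := Finset.sum_le_sum hstep
      have hsplit : ∑ k ∈ Finset.range (m + 2),
          (numDerangements (m + 1 - k) : ℝ)
            * (((m + 1).choose k : ℝ) + Sv * (if k = 0 then 0 else (m.choose (k - 1) : ℝ)))
          = ((m + 1).factorial : ℝ) + Sv * (m.factorial : ℝ) := by
        have e1 : ∑ k ∈ Finset.range (m + 2),
            (numDerangements (m + 1 - k) : ℝ) * ((m + 1).choose k : ℝ)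
            = ((m + 1).factorial : ℝ) := key_id (m + 1)
        have e2 : ∑ k ∈ Finset.range (m + 2),
            (numDerangements (m + 1 - k) : ℝ)
              * (if k = 0 then 0 else (m.choose (k - 1) : ℝ))
            = (m.factorial : ℝ) := by
          rw [Finset.sum_range_succ']
          simp only [Nat.succ_ne_zero, if_false, if_true, eq_self_iff_true, mul_zero,
            add_zero, Nat.add_sub_cancel]
          rw [← key_id m]
          refine Finset.sum_congr rfl fun k _ => ?_
          rw [show m + 1 - (k + 1) = m - k from by omega]
        calc ∑ k ∈ Finset.range (m + 2),
            (numDerangements (m + 1 - k) : ℝ)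
              * (((m + 1).choose k : ℝ) + Sv * (if k = 0 then 0 else (m.choose (k - 1) : ℝ)))
            = ∑ k ∈ Finset.range (m + 2),
              ((numDerangements (m + 1 - k) : ℝ) * ((m + 1).choose k : ℝ)
                + Sv * ((numDerangements (m + 1 - k) : ℝ)
                  * (if k = 0 then 0 else (m.choose (k - 1) : ℝ)))) := by
              exact Finset.sum_congr rfl fun k _ => by ring
          _ = ((m + 1).factorial : ℝ) + Sv * (m.factorial : ℝ) := by
              rw [Finset.sum_add_distrib, e1, ← Finset.mul_sum, e2]
      linarith [hsum, hsplit.ge, hsplit.le]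
    -- upper bound for SR
    have hSRub : SR < (2 * (m + 1) + Sv) / 4 := by
      have hrw : SR = ∑ j ∈ U, x j / (2 * Real.sqrt (x i * x j)) := by
        have hrfl : SR = ∑ S ∈ (Finset.univ : Finset (Fin (m + 2))).powersetCard (1 + 1),
            if i ∈ S then P S / (2 * Real.sqrt (x i * P S)) else 0 := rfl
        rw [hrfl, ← hins, sum_ite_powersetCard_insert hiU, Finset.powersetCard_one,
          Finset.sum_map]
        refine Finset.sum_congr rfl fun j hj => ?_
        have hji : j ≠ i := Finset.ne_of_mem_erase hj
        have hPij : P (insert i {j}) = x j := by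
          simp only [hPdef]
          rw [Finset.erase_insert (by simp [Ne.symm hji] : i ∉ ({j} : Finset (Fin (m + 2))))]
          simp
        simp only [Function.Embedding.coeFn_mk, hPij]
      have hUne : U.Nonempty := Finset.card_pos.mp (by rw [hcardU]; omega)
      have hterm : ∀ j ∈ U, x j / (2 * Real.sqrt (x i * x j)) < (1 + x j) / 4 := by
        intro j _
        have ha : 1 < Real.sqrt (x j) := by
          rw [show (1 : ℝ) = Real.sqrt 1 by simp]
          exact Real.sqrt_lt_sqrt (by norm_num) (hx j)
        have hb : 1 < Real.sqrt (x i) := by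
          rw [show (1 : ℝ) = Real.sqrt 1 by simp]
          exact Real.sqrt_lt_sqrt (by norm_num) (hx i)
        have hsq : Real.sqrt (x i * x j) = Real.sqrt (x i) * Real.sqrt (x j) :=
          Real.sqrt_mul (le_of_lt (hx0 i)) _
        have hxj : x j = Real.sqrt (x j) ^ 2 := (Real.sq_sqrt (le_of_lt (hx0 j))).symm
        set a := Real.sqrt (x j) with hadef
        set b := Real.sqrt (x i) with hbdef
        rw [hsq, hxj]
        rw [div_lt_iff₀ (by positivity)]
        nlinarith [sq_nonneg (a - 1), mul_pos (sub_pos.mpr hb)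
          (mul_pos (lt_trans one_pos ha) (by nlinarith : (0 : ℝ) < 1 + a ^ 2)),
          lt_trans one_pos ha]
      have hsumlt : SR < ∑ j ∈ U, (1 + x j) / 4 := by
        rw [hrw]
        exact Finset.sum_lt_sum_of_nonempty hUne hterm
      have heq : ∑ j ∈ U, (1 + x j) / 4 = (2 * (m + 1) + Sv) / 4 := by
        rw [← Finset.sum_div]
        congr 1
        calc ∑ j ∈ U, (1 + x j) = ∑ j ∈ U, ((x j - 1) + 2) := by
              exact Finset.sum_congr rfl fun j _ => by ring
          _ = Sv + 2 * (m + 1) := by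
              rw [Finset.sum_add_distrib, Finset.sum_const, hcardU, ← hSvdef]
              push_cast; ring
          _ = 2 * (m + 1) + Sv := by ring
      linarith [hsumlt, heq.le, heq.ge]
    -- final arithmetic
    have hfactpos : (0 : ℝ) < ((m + 2).factorial : ℝ) := by
      exact_mod_cast Nat.factorial_pos (m + 2)
    have hCpos : (0 : ℝ) < ((m + 2).choose 2 : ℝ) := by
      exact_mod_cast Nat.choose_pos (show 2 ≤ m + 2 by omega)
    have hmfpos : (0 : ℝ) < (m.factorial : ℝ) := by exact_mod_cast Nat.factorial_pos m
    have hCfact : ((m + 2).factorial : ℝ)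
        = ((m + 2).choose 2 : ℝ) * 2 * (m.factorial : ℝ) := by
      have h := Nat.choose_mul_factorial_mul_factorial (show 2 ≤ m + 2 by omega)
      have h' : (m + 2).choose 2 * 2 * m.factorial = (m + 2).factorial := by
        have : (2 : ℕ).factorial = 2 := rfl
        rw [← h, this]
        congr 1
      exact_mod_cast h'.symm
    have hfact1 : ((m + 1).factorial : ℝ) = (m + 1) * (m.factorial : ℝ) := by
      exact_mod_cast Nat.factorial_succ m
    have h1 : (1 / ((m + 2).choose 2 : ℝ)) * SR
        < (1 / ((m + 2).choose 2 : ℝ)) * ((2 * (m + 1) + Sv) / 4) := by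
      apply mul_lt_mul_of_pos_left hSRub
      positivity
    have h2 : (1 / ((m + 2).factorial : ℝ)) * (((m + 1).factorial : ℝ) + Sv * (m.factorial : ℝ))
        ≤ (1 / ((m + 2).factorial : ℝ)) * S1 := by
      apply mul_le_mul_of_nonneg_left hS1lb
      positivity
    have h3 : (1 / ((m + 2).choose 2 : ℝ)) * ((2 * (m + 1) + Sv) / 4)
        ≤ (1 / ((m + 2).factorial : ℝ))
          * (((m + 1).factorial : ℝ) + Sv * (m.factorial : ℝ)) := by
      rw [hCfact, hfact1]
      set c : ℝ := ((m + 2).choose 2 : ℝ)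
      set f : ℝ := (m.factorial : ℝ)
      have hc : c ≠ 0 := ne_of_gt hCpos
      have hf : f ≠ 0 := ne_of_gt hmfpos
      have key : (1 / (c * 2 * f)) * (((m : ℝ) + 1) * f + Sv * f)
          - (1 / c) * ((2 * ((m : ℝ) + 1) + Sv) / 4) = Sv / (4 * c) := by
        field_simp
        ring
      have h4c : (0 : ℝ) ≤ 4 * c := by linarith [hCpos]
      have hge : 0 ≤ Sv / (4 * c) := div_nonneg hSv h4c
      linarith [key.ge, key.le]
    linarith [h1, h2, h3]
end

section
/- For any integer n ≥ 2, any x = (x_1, …, x_n) with all coordinates strictly positive, and any k ∈ [n−1], the differential operator O_k = x_k ∂/∂x_k − x_n ∂/∂x_n applied to f_n satisfies O_k f_n(x) = (1/n!) (x_k − x_n) S_k(x). -/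
open Finset

/-- `S_k(x) = ∑_{i=1}^{n-2} c_{n-i} e_{i-1}(x̂_{k,l}) − (n-2)! ∑_{i ≠ k,l} √x_i/(√x_k + √x_l)`,
where `x̂_{k,l}` is `x` with the `k`-th and `l`-th coordinates removed (here `l` plays the role
of the last index `n`, and `e_{i-1}` is expressed by summing over subsets of `[n] \ {k, l}`). -/
noncomputable def Sfun (n : ℕ) (k l : Fin n) (x : Fin n → ℝ) : ℝ :=
  (∑ i ∈ Finset.Icc 1 (n - 2), (numDerangements (n - i) : ℝ) *
      ∑ S ∈ ((Finset.univ.erase k).erase l).powersetCard (i - 1), ∏ j ∈ S, x j)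
    - ((n - 2).factorial : ℝ) *
        ∑ i ∈ (Finset.univ.erase k).erase l,
          Real.sqrt (x i) / (Real.sqrt (x k) + Real.sqrt (x l))

lemma sum_powersetCard_split {α : Type*} [DecidableEq α] (s : Finset α) {j : α} (hj : j ∈ s)
    (m : ℕ) (F : Finset α → ℝ) :
    ∑ S ∈ s.powersetCard (m+1), F S
      = (∑ S ∈ (s.erase j).powersetCard (m+1), F S)
        + ∑ S ∈ (s.erase j).powersetCard m, F (insert j S) := by
  conv_lhs => rw [← Finset.insert_erase hj,
    Finset.powersetCard_succ_insert (Finset.notMem_erase j s)]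
  rw [Finset.sum_union, Finset.sum_image]
  · intro S hS T hT hST
    rw [Finset.mem_coe, Finset.mem_powersetCard] at hS hT
    have hjS : j ∉ S := fun h => Finset.notMem_erase j s (hS.1 h)
    have hjT : j ∉ T := fun h => Finset.notMem_erase j s (hT.1 h)
    have := congrArg (fun u => Finset.erase u j) hST
    simpa [Finset.erase_insert hjS, Finset.erase_insert hjT] using this
  · rw [Finset.disjoint_right]
    rintro S hS hS'
    simp only [Finset.mem_image] at hS
    obtain ⟨T, hT, rfl⟩ := hS
    rw [Finset.mem_powersetCard] at hS'
    exact Finset.notMem_erase j s (hS'.1 (Finset.mem_insert_self j T))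

lemma prod_update_notmem {n : ℕ} (x : Fin n → ℝ) (k : Fin n) (t : ℝ) {S : Finset (Fin n)}
    (hk : k ∉ S) : ∏ i ∈ S, Function.update x k t i = ∏ i ∈ S, x i :=
  Finset.prod_congr rfl fun i hi => Function.update_of_ne (by rintro rfl; exact hk hi) _ _

lemma Efun_update (n : ℕ) (m : ℕ) (x : Fin n → ℝ) (k : Fin n) (t : ℝ) :
    Efun n (m+1) (Function.update x k t)
      = (∑ S ∈ (univ.erase k).powersetCard (m+1), ∏ i ∈ S, x i)
        + t * ∑ S ∈ (univ.erase k).powersetCard m, ∏ i ∈ S, x i := by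
  rw [Efun, sum_powersetCard_split univ (mem_univ k) m]
  congr 1
  · refine Finset.sum_congr rfl fun S hS => ?_
    rw [mem_powersetCard] at hS
    exact prod_update_notmem x k t (fun h => notMem_erase k univ (hS.1 h))
  · rw [Finset.mul_sum]
    refine Finset.sum_congr rfl fun S hS => ?_
    rw [mem_powersetCard] at hS
    have hkS : k ∉ S := fun h => notMem_erase k univ (hS.1 h)
    rw [Finset.prod_insert hkS, Function.update_self, prod_update_notmem x k t hkS]

lemma Rfun_update (n : ℕ) (x : Fin n → ℝ) (hx : ∀ i, 0 ≤ x i) (k : Fin n) (t : ℝ) :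
    Rfun n (Function.update x k t)
      = (1 / (n.choose 2 : ℝ)) * (∑ S ∈ (univ.erase k).powersetCard 2, Real.sqrt (∏ i ∈ S, x i))
        + Real.sqrt t * ((1 / (n.choose 2 : ℝ)) * ∑ j ∈ univ.erase k, Real.sqrt (x j)) := by
  rw [Rfun, show (2:ℕ) = 1+1 from rfl,
    sum_powersetCard_split univ (mem_univ k) 1 (fun S => Real.sqrt (∏ i ∈ S, Function.update x k t i)),
    mul_add]
  congr 1
  · congr 1
    refine Finset.sum_congr rfl fun S hS => ?_
    rw [mem_powersetCard] at hS
    rw [prod_update_notmem x k t (fun h => notMem_erase k univ (hS.1 h))]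
  · rw [Finset.powersetCard_one, Finset.sum_map]
    have : ∀ j ∈ univ.erase k,
        Real.sqrt (∏ i ∈ insert k ((⟨_, Finset.singleton_injective⟩ : Fin n ↪ Finset (Fin n)) j),
          Function.update x k t i) = Real.sqrt t * Real.sqrt (x j) := by
      intro j hj
      have hjk : k ∉ ({j} : Finset (Fin n)) := by
        simp only [Finset.mem_singleton]
        exact fun h => (Finset.ne_of_mem_erase hj) h.symm
      simp only [Function.Embedding.coeFn_mk]
      rw [Finset.prod_insert hjk, Function.update_self, Finset.prod_singleton,
        Function.update_of_ne (Finset.ne_of_mem_erase hj), Real.sqrt_mul' t (hx j)]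
    rw [Finset.sum_congr rfl this, ← Finset.mul_sum]
    ring

lemma hasDerivAt_ffun (n : ℕ) (x : Fin n → ℝ) (hx : ∀ i, 0 < x i) (k : Fin n) :
    HasDerivAt (fun t => ffun n (Function.update x k t))
      ((1 / (n.factorial : ℝ)) * ∑ m ∈ Finset.range n, (numDerangements (n - (m+1)) : ℝ) *
          ∑ S ∈ (univ.erase k).powersetCard m, ∏ i ∈ S, x i
        - (1 / (2 * Real.sqrt (x k))) * ((1 / (n.choose 2 : ℝ)) *
            ∑ j ∈ univ.erase k, Real.sqrt (x j)))
      (x k) := by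
  have hL : HasDerivAt (fun t => Lfun n (Function.update x k t))
      ((1 / (n.factorial : ℝ)) * ∑ m ∈ Finset.range n, (numDerangements (n - (m+1)) : ℝ) *
          ∑ S ∈ (univ.erase k).powersetCard m, ∏ i ∈ S, x i) (x k) := by
    have heq : (fun t => Lfun n (Function.update x k t))
        = fun t => ((1 / (n.factorial : ℝ)) *
            ((∑ m ∈ Finset.range n, (numDerangements (n - (m+1)) : ℝ) *
              ∑ S ∈ (univ.erase k).powersetCard (m+1), ∏ i ∈ S, x i) + (numDerangements n : ℝ)))
          + t * ((1 / (n.factorial : ℝ)) * ∑ m ∈ Finset.range n, (numDerangements (n - (m+1)) : ℝ) *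
              ∑ S ∈ (univ.erase k).powersetCard m, ∏ i ∈ S, x i) := by
      funext t
      rw [Lfun, Finset.sum_range_succ']
      simp only [Efun_update, Efun_zero, Nat.sub_zero, mul_one, mul_add]
      have : ∑ m ∈ Finset.range n, ((numDerangements (n - (m+1)) : ℝ) *
            ∑ S ∈ (univ.erase k).powersetCard (m+1), ∏ i ∈ S, x i
            + (numDerangements (n - (m+1)) : ℝ) *
              (t * ∑ S ∈ (univ.erase k).powersetCard m, ∏ i ∈ S, x i))
          = (∑ m ∈ Finset.range n, (numDerangements (n - (m+1)) : ℝ) *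
              ∑ S ∈ (univ.erase k).powersetCard (m+1), ∏ i ∈ S, x i)
            + t * ∑ m ∈ Finset.range n, (numDerangements (n - (m+1)) : ℝ) *
              ∑ S ∈ (univ.erase k).powersetCard m, ∏ i ∈ S, x i := by
        rw [Finset.sum_add_distrib, Finset.mul_sum]
        congr 1
        exact Finset.sum_congr rfl fun m _ => by ring
      rw [this]
      ring
    rw [heq]
    exact (hasDerivAt_mul_const _).const_add _
  have hR : HasDerivAt (fun t => Rfun n (Function.update x k t))
      ((1 / (2 * Real.sqrt (x k))) * ((1 / (n.choose 2 : ℝ)) *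
          ∑ j ∈ univ.erase k, Real.sqrt (x j))) (x k) := by
    have heq : (fun t => Rfun n (Function.update x k t))
        = fun t => (1 / (n.choose 2 : ℝ)) * (∑ S ∈ (univ.erase k).powersetCard 2, Real.sqrt (∏ i ∈ S, x i))
          + Real.sqrt t * ((1 / (n.choose 2 : ℝ)) * ∑ j ∈ univ.erase k, Real.sqrt (x j)) := by
      funext t; exact Rfun_update n x (fun i => (hx i).le) k t
    rw [heq]
    exact ((Real.hasDerivAt_sqrt (ne_of_gt (hx k))).mul_const _).const_add _
  exact hL.sub hR

lemma eB_split {n : ℕ} (x : Fin n → ℝ) {k l : Fin n} (hkl : k ≠ l) (m : ℕ) :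
    x k * (∑ S ∈ (univ.erase k).powersetCard m, ∏ i ∈ S, x i)
      - x l * (∑ S ∈ (univ.erase l).powersetCard m, ∏ i ∈ S, x i)
    = (x k - x l) * ∑ S ∈ ((univ.erase k).erase l).powersetCard m, ∏ i ∈ S, x i := by
  cases m with
  | zero => simp [Finset.powersetCard_zero]
  | succ m =>
    have hlk : l ∈ univ.erase k := Finset.mem_erase.2 ⟨hkl.symm, Finset.mem_univ l⟩
    have hkl' : k ∈ univ.erase l := Finset.mem_erase.2 ⟨hkl, Finset.mem_univ k⟩
    have h1 := sum_powersetCard_split (univ.erase k) hlk m (fun S => ∏ i ∈ S, x i)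
    have h2 := sum_powersetCard_split (univ.erase l) hkl' m (fun S => ∏ i ∈ S, x i)
    have hI1 : ∑ S ∈ ((univ.erase k).erase l).powersetCard m, ∏ i ∈ insert l S, x i
        = x l * ∑ S ∈ ((univ.erase k).erase l).powersetCard m, ∏ i ∈ S, x i := by
      rw [Finset.mul_sum]
      refine Finset.sum_congr rfl fun S hS => ?_
      rw [Finset.mem_powersetCard] at hS
      exact Finset.prod_insert (fun h => Finset.notMem_erase l _ (hS.1 h))
    rw [Finset.erase_right_comm] at h2
    have hI2 : ∑ S ∈ ((univ.erase k).erase l).powersetCard m, ∏ i ∈ insert k S, x i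
        = x k * ∑ S ∈ ((univ.erase k).erase l).powersetCard m, ∏ i ∈ S, x i := by
      rw [Finset.mul_sum]
      refine Finset.sum_congr rfl fun S hS => ?_
      rw [Finset.mem_powersetCard] at hS
      refine Finset.prod_insert (fun h => ?_)
      have := hS.1 h
      rw [Finset.mem_erase, Finset.mem_erase] at this
      exact this.2.1 rfl
    rw [hI1] at h1
    rw [hI2] at h2
    rw [h1, h2]
    ring

/-- For `n ≥ 2`, `x` with strictly positive coordinates, and `k ∈ [n-1]`
(i.e. `k` ranging over all indices other than the last one `n`), the differential operator
`O_k = x_k ∂/∂x_k − x_n ∂/∂x_n` applied to `f_n` satisfies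
`O_k f_n(x) = (1/n!) (x_k − x_n) S_k(x)`. -/
theorem operator_formula (n : ℕ) (hn : 2 ≤ n) (x : Fin n → ℝ) (hx : ∀ i, 0 < x i)
    (k : Fin n) (hk : (k : ℕ) < n - 1) :
    ∃ dk dn : ℝ,
      HasDerivAt (fun t => ffun n (Function.update x k t)) dk (x k) ∧
      HasDerivAt (fun t => ffun n (Function.update x ⟨n - 1, by omega⟩ t)) dn
        (x ⟨n - 1, by omega⟩) ∧
      x k * dk - x ⟨n - 1, by omega⟩ * dn =
        (1 / (n.factorial : ℝ)) * (x k - x ⟨n - 1, by omega⟩) *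
          Sfun n k ⟨n - 1, by omega⟩ x := by
  obtain ⟨p, rfl⟩ : ∃ p, n = p + 2 := ⟨n - 2, by omega⟩
  set l : Fin (p + 2) := ⟨p + 2 - 1, by omega⟩ with hldef
  have hkl : k ≠ l := by
    intro h
    apply absurd hk
    rw [h, hldef]
    simp
  refine ⟨_, _, hasDerivAt_ffun _ x hx k, hasDerivAt_ffun _ x hx l, ?_⟩
  -- notation
  set sk := Real.sqrt (x k) with hskdef
  set sl := Real.sqrt (x l) with hsldef
  have hsk : 0 < sk := Real.sqrt_pos.2 (hx k)
  have hsl : 0 < sl := Real.sqrt_pos.2 (hx l)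
  have hxk : x k = sk * sk := (Real.mul_self_sqrt (hx k).le).symm
  have hxl : x l = sl * sl := (Real.mul_self_sqrt (hx l).le).symm
  have hlk : l ∈ univ.erase k := Finset.mem_erase.2 ⟨hkl.symm, Finset.mem_univ l⟩
  have hkl' : k ∈ univ.erase l := Finset.mem_erase.2 ⟨hkl, Finset.mem_univ k⟩
  set T := ∑ i ∈ (univ.erase k).erase l, Real.sqrt (x i) with hTdef
  have hCk : ∑ j ∈ univ.erase k, Real.sqrt (x j) = sl + T :=
    (Finset.add_sum_erase _ _ hlk).symm
  have hCl : ∑ j ∈ univ.erase l, Real.sqrt (x j) = sk + T := by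
    rw [← Finset.add_sum_erase _ _ hkl', Finset.erase_right_comm]
  set E : ℕ → ℝ := fun m => ∑ S ∈ ((univ.erase k).erase l).powersetCard m, ∏ i ∈ S, x i
    with hEdef
  -- the L-part sums
  have hEcard : ((univ.erase k).erase l).card = p := by
    rw [Finset.card_erase_of_mem hlk, Finset.card_erase_of_mem (Finset.mem_univ k),
      Finset.card_univ, Fintype.card_fin]
    omega
  have hEtop : E (p + 1) = 0 := by
    rw [hEdef]
    simp only
    rw [Finset.powersetCard_eq_empty.2 (by rw [hEcard]; omega), Finset.sum_empty]
  have hsum : ∑ m ∈ Finset.range (p + 2), (numDerangements (p + 2 - (m+1)) : ℝ) * E m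
      = ∑ i ∈ Finset.Icc 1 p, (numDerangements (p + 2 - i) : ℝ) * E (i - 1) := by
    rw [Finset.sum_range_succ, Finset.sum_range_succ]
    have e1 : (numDerangements (p + 2 - (p + 1)) : ℝ) = 0 := by
      rw [show p + 2 - (p + 1) = 1 by omega, numDerangements_one]; norm_num
    rw [e1, hEtop]
    simp only [mul_zero, zero_mul, add_zero]
    refine Finset.sum_nbij' (fun m => m + 1) (fun i => i - 1) ?_ ?_ ?_ ?_ ?_
    · intro a ha; rw [Finset.mem_range] at ha; rw [Finset.mem_Icc]; omega
    · intro a ha; rw [Finset.mem_Icc] at ha; rw [Finset.mem_range]; omega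
    · intro a _; omega
    · intro a ha; rw [Finset.mem_Icc] at ha; omega
    · intro a _
      rw [show a + 1 - 1 = a by omega]
  -- L part
  have hLpart :
      x k * ((1 / ((p+2).factorial : ℝ)) * ∑ m ∈ Finset.range (p+2),
          (numDerangements (p + 2 - (m+1)) : ℝ) *
          ∑ S ∈ (univ.erase k).powersetCard m, ∏ i ∈ S, x i)
        - x l * ((1 / ((p+2).factorial : ℝ)) * ∑ m ∈ Finset.range (p+2),
            (numDerangements (p + 2 - (m+1)) : ℝ) *
            ∑ S ∈ (univ.erase l).powersetCard m, ∏ i ∈ S, x i)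
      = (1 / ((p+2).factorial : ℝ)) * ((x k - x l) *
          ∑ i ∈ Finset.Icc 1 p, (numDerangements (p + 2 - i) : ℝ) * E (i - 1)) := by
    rw [mul_left_comm (x k), mul_left_comm (x l), ← mul_sub]
    congr 1
    rw [← hsum, Finset.mul_sum, Finset.mul_sum, Finset.mul_sum, ← Finset.sum_sub_distrib]
    refine Finset.sum_congr rfl fun m _ => ?_
    calc x k * ((numDerangements (p + 2 - (m+1)) : ℝ) *
            ∑ S ∈ (univ.erase k).powersetCard m, ∏ i ∈ S, x i)
          - x l * ((numDerangements (p + 2 - (m+1)) : ℝ) *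
            ∑ S ∈ (univ.erase l).powersetCard m, ∏ i ∈ S, x i)
        = (numDerangements (p + 2 - (m+1)) : ℝ) *
            (x k * (∑ S ∈ (univ.erase k).powersetCard m, ∏ i ∈ S, x i)
              - x l * (∑ S ∈ (univ.erase l).powersetCard m, ∏ i ∈ S, x i)) := by ring
      _ = (numDerangements (p + 2 - (m+1)) : ℝ) * ((x k - x l) * E m) := by
            rw [eB_split x hkl m]
      _ = (x k - x l) * ((numDerangements (p + 2 - (m+1)) : ℝ) * E m) := by ring
  -- R part
  have hfact : (((p+2).choose 2 : ℝ)) * 2 * (p.factorial : ℝ) = ((p+2).factorial : ℝ) := by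
    have := Nat.choose_mul_factorial_mul_factorial (show 2 ≤ p + 2 by omega)
    have h2 : (2 : ℕ).factorial = 2 := rfl
    rw [h2, show p + 2 - 2 = p by omega] at this
    exact_mod_cast congrArg (fun m : ℕ => (m : ℝ)) this
  have hchoosepos : (0:ℝ) < ((p+2).choose 2 : ℝ) := by
    exact_mod_cast Nat.choose_pos (show 2 ≤ p + 2 by omega)
  have hRpart :
      x k * ((1 / (2 * sk)) * ((1 / (((p+2).choose 2 : ℕ) : ℝ)) * (sl + T)))
        - x l * ((1 / (2 * sl)) * ((1 / (((p+2).choose 2 : ℕ) : ℝ)) * (sk + T)))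
      = (1 / ((p+2).factorial : ℝ)) * ((x k - x l) *
          ((p.factorial : ℝ) * (T / (sk + sl)))) := by
    rw [hxk, hxl, ← hfact]
    have h1 : sk + sl ≠ 0 := by positivity
    have h2 : ((p+2).choose 2 : ℝ) ≠ 0 := ne_of_gt hchoosepos
    have h3 : (p.factorial : ℝ) ≠ 0 := by positivity
    field_simp
    ring
  -- assemble
  rw [Sfun]
  rw [show ∑ i ∈ (univ.erase k).erase l, Real.sqrt (x i) / (Real.sqrt (x k) + Real.sqrt (x l))
      = T / (sk + sl) by rw [hTdef, Finset.sum_div]]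
  rw [show (p + 2 - 2) = p by omega]
  rw [hCk, hCl, mul_sub, mul_sub, sub_sub_sub_comm, hLpart, hRpart]
  simp only [hEdef]
  ring
end

section
/- Let n ≥ 4 be an integer and let x_{n−1}, x_n be reals with 0 < x_{n−1} ≤ x_n and x_n ≥ 1. Then for every real t with 0 < t ≤ x_{n−1}, we have F_{n−1}(t) > 0, where F_{n−1}(t) = c_{n−1}/(n−2) + c_{n−2} t − (n−2)! √t / (√(x_{n−1}) + √(x_n)). -/
lemma fact_le_three_numDerangements :
    ∀ k : ℕ, (k+2).factorial ≤ 3 * numDerangements (k+2) ∧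
      (k+3).factorial ≤ 3 * numDerangements (k+3) := by
  intro k
  induction k with
  | zero => refine ⟨by decide, by decide⟩
  | succ k ih =>
    obtain ⟨h1, h2⟩ := ih
    refine ⟨h2, ?_⟩
    have hrec : numDerangements (k + 4) =
        (k + 3) * (numDerangements (k + 2) + numDerangements (k + 3)) := by
      simpa [show k + 2 + 2 = k + 4 from rfl, show k + 2 + 1 = k + 3 from rfl]
        using numDerangements_add_two (k + 2)
    have hf : (k + 4).factorial = (k + 4) * (k + 3).factorial := rfl
    have hf2 : (k + 3).factorial = (k + 3) * (k + 2).factorial := rfl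
    nlinarith [Nat.factorial_pos (k+2)]

/-- For `n ≥ 4`, reals `0 < x_{n-1} ≤ x_n` with `x_n ≥ 1`, and any real
`0 < t ≤ x_{n-1}`, we have `F_{n-1}(t) > 0`, where
`F_{n-1}(t) = c_{n-1}/(n-2) + c_{n-2} t − (n-2)! √t / (√x_{n-1} + √x_n)` and
`c_j = numDerangements j`. -/
theorem F_pred_pos (n : ℕ) (hn : 4 ≤ n) (xnm1 xn : ℝ)
    (h1 : 0 < xnm1) (h2 : xnm1 ≤ xn) (h3 : 1 ≤ xn)
    (t : ℝ) (ht0 : 0 < t) (ht1 : t ≤ xnm1) :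
    0 < (numDerangements (n - 1) : ℝ) / ((n : ℝ) - 2) + (numDerangements (n - 2) : ℝ) * t
        - ((n - 2).factorial : ℝ) * Real.sqrt t / (Real.sqrt xnm1 + Real.sqrt xn) := by
  obtain ⟨k, rfl⟩ : ∃ k, n = k + 4 := ⟨n - 4, by omega⟩
  have e1 : k + 4 - 1 = k + 3 := by omega
  have e2 : k + 4 - 2 = k + 2 := by omega
  rw [e1, e2]
  have ecast : ((k + 4 : ℕ) : ℝ) - 2 = (k : ℝ) + 2 := by push_cast; ring
  rw [ecast]
  -- recurrence: c_{k+3} = (k+2) (c_{k+1} + c_{k+2})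
  have hrec : numDerangements (k + 3) =
      (k + 2) * (numDerangements (k + 1) + numDerangements (k + 2)) := by
    simpa [show k + 1 + 2 = k + 3 from rfl, show k + 1 + 1 = k + 2 from rfl]
      using numDerangements_add_two (k + 1)
  have hk2 : (0:ℝ) < (k:ℝ) + 2 := by positivity
  have hA : (numDerangements (k + 3) : ℝ) / ((k : ℝ) + 2)
      = (numDerangements (k + 1) : ℝ) + (numDerangements (k + 2) : ℝ) := by
    rw [hrec]; push_cast; field_simp
  rw [hA]
  set s := Real.sqrt t with hs
  have hs0 : 0 < s := Real.sqrt_pos.mpr ht0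
  have hst : s ^ 2 = t := Real.sq_sqrt ht0.le
  have hd0 : (0:ℝ) ≤ (numDerangements (k + 1) : ℝ) := by positivity
  have hfc : ((k + 2).factorial : ℝ) ≤ 3 * (numDerangements (k + 2) : ℝ) := by
    exact_mod_cast (fact_le_three_numDerangements k).1
  have hf1 : (1:ℝ) ≤ ((k + 2).factorial : ℝ) := by
    exact_mod_cast Nat.one_le_iff_ne_zero.mpr (Nat.factorial_ne_zero (k+2))
  set c : ℝ := (numDerangements (k + 2) : ℝ)
  set d : ℝ := (numDerangements (k + 1) : ℝ)
  set f : ℝ := ((k + 2).factorial : ℝ)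
  -- denominator bound
  have hD1 : s ≤ Real.sqrt xnm1 := Real.sqrt_le_sqrt ht1
  have hD2 : (1:ℝ) ≤ Real.sqrt xn := Real.one_le_sqrt.mpr h3
  have hDpos : 0 < Real.sqrt xnm1 + Real.sqrt xn := by linarith
  have hbound : f * s / (Real.sqrt xnm1 + Real.sqrt xn) ≤ f * (s + 1) / 4 := by
    have step1 : f * s / (Real.sqrt xnm1 + Real.sqrt xn) ≤ f * s / (s + 1) := by
      apply div_le_div_of_nonneg_left (by positivity) (by linarith) (by linarith)
    have step2 : f * s / (s + 1) ≤ f * (s + 1) / 4 := by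
      rw [div_le_div_iff₀ (by linarith) (by norm_num)]
      nlinarith [sq_nonneg (s - 1)]
    linarith
  have hquad : 0 < d + c + c * t - f * (s + 1) / 4 := by
    rw [← hst]
    have hc1 : (1:ℝ) ≤ 3 * c := le_trans hf1 hfc
    nlinarith [sq_nonneg (8 * c * s - f), sq_nonneg s, mul_pos hs0 hs0]
  linarith
end

section
/- Let n ≥ 4 be an integer and let x = (x_1, …, x_n) satisfy 0 < x_1 ≤ x_2 ≤ ⋯ ≤ x_n with x_{n−2} < x_{n−1} = x_n and x_n ≥ 1. Then F_{n−2}(x_1) + F_{n−2}(x_{n−1}) > 0, where F_{n−2}(t) = c_{n−1}/(n−2) + c_{n−2} t − (n−2)! √t / (√(x_{n−2}) + √(x_n)). -/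
/-- `F t = c_{n-1}/(n-2) + c_{n-2} t − (n-2)! √t / (√xk + √xn)`, where `c_j = numDerangements j`.
Taking `xk = x_{n-2}` and `xn = x_n` gives the function `F_{n-2}` of the paper. -/
noncomputable def Ffun (n : ℕ) (xk xn t : ℝ) : ℝ :=
  (numDerangements (n - 1) : ℝ) / ((n : ℝ) - 2) + (numDerangements (n - 2) : ℝ) * t
    - ((n - 2).factorial : ℝ) * Real.sqrt t / (Real.sqrt xk + Real.sqrt xn)

private lemma der_aux (k : ℕ) :
    (k+2).factorial ≤ 3 * numDerangements (k+2) ∧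
      (k+3).factorial ≤ 3 * numDerangements (k+3) := by
  induction k with
  | zero =>
    constructor <;> simp [numDerangements_add_two, Nat.factorial]
  | succ k ih =>
    refine ⟨ih.2, ?_⟩
    have h1 := ih.1
    have h2 := ih.2
    rw [show k+1+3 = k+2+2 from rfl, numDerangements_add_two]
    have hf4 : (k+2+2).factorial = (k+4)*(k+3).factorial := rfl
    have hf3 : (k+3).factorial = (k+3)*(k+2).factorial := rfl
    nlinarith [h1, h2]

private lemma F_key (k : ℕ) (a b c t : ℝ) (ht : 0 < t) (hta : t ≤ a) (hab : a < c)
    (hcb : c = b) (hb1 : 1 ≤ b) :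
    0 < Ffun (k+4) a b t + Ffun (k+4) a b c := by
  rw [← hcb] at hb1 ⊢
  have ha : 0 < a := lt_of_lt_of_le ht hta
  have hb0 : 0 < c := lt_trans ha hab
  have hst : Real.sqrt t ≤ Real.sqrt a := Real.sqrt_le_sqrt hta
  have hsb : 0 < Real.sqrt c := Real.sqrt_pos.mpr hb0
  have hst0 : 0 ≤ Real.sqrt t := Real.sqrt_nonneg t
  have hsa : 0 ≤ Real.sqrt a := Real.sqrt_nonneg a
  have hs : 0 < Real.sqrt a + Real.sqrt c := by linarith
  -- nat inequality
  obtain ⟨h1, h2⟩ := der_aux k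
  have hf3 : (k+3).factorial = (k+3)*(k+2).factorial := rfl
  have hnat : (k+2) * (k+2).factorial
      ≤ 2 * numDerangements (k+3) + (k+2) * numDerangements (k+2) := by
    nlinarith [h1, h2, Nat.factorial_pos (k+2)]
  have hd1 : 1 ≤ numDerangements (k+2) := by
    have h2f : 2 ≤ (k+2).factorial := le_trans (by omega) (Nat.self_le_factorial _)
    omega
  have hreal : ((k:ℝ)+2) * (k+2).factorial
      ≤ 2 * numDerangements (k+3) + ((k:ℝ)+2) * numDerangements (k+2) := by
    exact_mod_cast hnat
  have hd1r : (1:ℝ) ≤ numDerangements (k+2) := by exact_mod_cast hd1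
  have hfpos : (0:ℝ) < (k+2).factorial := by exact_mod_cast Nat.factorial_pos (k+2)
  have hk2 : (0:ℝ) < (k:ℝ)+2 := by positivity
  -- fraction bound
  have hfrac : ((k+2).factorial : ℝ) * Real.sqrt t / (Real.sqrt a + Real.sqrt c)
      + ((k+2).factorial : ℝ) * Real.sqrt c / (Real.sqrt a + Real.sqrt c)
      ≤ ((k+2).factorial : ℝ) := by
    rw [← add_div, div_le_iff₀ hs]
    nlinarith
  -- derangement bound as reals divided by k+2
  have hder : ((k+2).factorial : ℝ)
      ≤ 2 * ((numDerangements (k+3) : ℝ) / ((k:ℝ)+2)) + (numDerangements (k+2) : ℝ) := by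
    have key : ((k+2).factorial : ℝ) * ((k:ℝ)+2)
        ≤ (2 * ((numDerangements (k+3) : ℝ) / ((k:ℝ)+2)) + (numDerangements (k+2) : ℝ))
          * ((k:ℝ)+2) := by
      field_simp
      nlinarith [hreal]
    exact le_of_mul_le_mul_right key hk2
  show (0:ℝ) < ((numDerangements (k+4-1) : ℝ) / (((k+4:ℕ) : ℝ) - 2)
      + (numDerangements (k+4-2) : ℝ) * t
      - ((k+4-2).factorial : ℝ) * Real.sqrt t / (Real.sqrt a + Real.sqrt c))
      + ((numDerangements (k+4-1) : ℝ) / (((k+4:ℕ) : ℝ) - 2)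
      + (numDerangements (k+4-2) : ℝ) * c
      - ((k+4-2).factorial : ℝ) * Real.sqrt c / (Real.sqrt a + Real.sqrt c))
  have e1 : k+4-1 = k+3 := rfl
  have e2 : k+4-2 = k+2 := rfl
  rw [e1, e2]
  have e3 : ((k+4:ℕ) : ℝ) - 2 = (k:ℝ)+2 := by push_cast; ring
  rw [e3]
  nlinarith [mul_le_mul_of_nonneg_left hb1 (le_of_lt (lt_of_lt_of_le zero_lt_one hd1r)),
    mul_pos (lt_of_lt_of_le zero_lt_one hd1r) ht]

/-- For `n ≥ 4` and `x` with `0 < x_1 ≤ ⋯ ≤ x_n`, `x_{n-2} < x_{n-1} = x_n`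
and `x_n ≥ 1`, we have `F_{n-2}(x_1) + F_{n-2}(x_{n-1}) > 0` (the paper's coordinates
`x_1, x_{n-2}, x_{n-1}, x_n` are the `0`-indexed coordinates `0, n-3, n-2, n-1`). -/
theorem F_pair_pos (n : ℕ) (hn : 4 ≤ n) (x : Fin n → ℝ)
    (hpos : 0 < x ⟨0, by omega⟩) (hmono : Monotone x)
    (hlt : x ⟨n - 3, by omega⟩ < x ⟨n - 2, by omega⟩)
    (heq : x ⟨n - 2, by omega⟩ = x ⟨n - 1, by omega⟩)
    (hge : 1 ≤ x ⟨n - 1, by omega⟩) :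
    0 < Ffun n (x ⟨n - 3, by omega⟩) (x ⟨n - 1, by omega⟩) (x ⟨0, by omega⟩)
        + Ffun n (x ⟨n - 3, by omega⟩) (x ⟨n - 1, by omega⟩) (x ⟨n - 2, by omega⟩) := by
  obtain ⟨k, rfl⟩ : ∃ k, n = k + 4 := ⟨n - 4, by omega⟩
  exact F_key k _ _ _ _ hpos (hmono (Fin.mk_le_mk.mpr (by omega))) hlt heq hge
end

section
/- Let n = 2ℓ be an even integer with ℓ ≥ 2, let t ∈ {0, 1, …, ℓ−2}, set k = ℓ − t − 1, and let x = (x_1, …, x_n) satisfy 0 < x_1 ≤ x_2 ≤ ⋯ ≤ x_n with x_k < x_{k+1} = ⋯ = x_n and x_n ≥ 1. Then with y = √(x_k / x_n), we have S_k(x) ≥ f(y, t), where f(y, t) = ∑_{i=1}^{n−2} c_{n−i} C(ℓ+t, i−1) − (n−2)! ( (ℓ+t)/(y+1) + (ℓ−t−2) y/(y+1) ). -/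
open Finset

theorem Sfun_aux (n : ℕ) (K L : Fin n) (x : Fin n → ℝ) (A B : Finset (Fin n)) (p q : ℕ)
    (hxpos : ∀ j, 0 < x j)
    (hTAB : (Finset.univ.erase K).erase L = A ∪ B)
    (hdisj : Disjoint A B)
    (hAcard : A.card = p) (hBcard : B.card = q)
    (hxB : ∀ j ∈ B, x j = x L)
    (hxA : ∀ j ∈ A, x j ≤ x K)
    (hge : 1 ≤ x L) :
    Sfun n K L x ≥
      (∑ i ∈ Finset.Icc 1 (n - 2), (numDerangements (n - i) : ℝ) * (q.choose (i - 1) : ℝ))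
        - ((n - 2).factorial : ℝ) *
            ((q : ℝ) / (Real.sqrt (x K / x L) + 1)
              + (p : ℝ) * (Real.sqrt (x K / x L) / (Real.sqrt (x K / x L) + 1))) := by
  have ha : 0 < x K := hxpos K
  have hb : 0 < x L := hxpos L
  have hsa : 0 < Real.sqrt (x K) := Real.sqrt_pos.mpr ha
  have hsb : 0 < Real.sqrt (x L) := Real.sqrt_pos.mpr hb
  have hden : 0 < Real.sqrt (x K) + Real.sqrt (x L) := by linarith
  have hy : Real.sqrt (x K / x L) = Real.sqrt (x K) / Real.sqrt (x L) :=
    Real.sqrt_div ha.le _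
  set T : Finset (Fin n) := (Finset.univ.erase K).erase L with hT
  -- Part 1 : elementary symmetric bound
  have h1 : ∀ i ∈ Finset.Icc 1 (n - 2),
      (numDerangements (n - i) : ℝ) * (q.choose (i - 1) : ℝ) ≤
        (numDerangements (n - i) : ℝ) * ∑ S ∈ T.powersetCard (i - 1), ∏ j ∈ S, x j := by
    intro i _
    apply mul_le_mul_of_nonneg_left _ (by positivity)
    have hBT : B ⊆ T := by rw [hTAB]; exact Finset.subset_union_right
    calc (q.choose (i - 1) : ℝ)
        = ∑ S ∈ B.powersetCard (i - 1), (1 : ℝ) := by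
          rw [Finset.sum_const, Finset.card_powersetCard, hBcard, nsmul_eq_mul, mul_one]
      _ ≤ ∑ S ∈ B.powersetCard (i - 1), ∏ j ∈ S, x j := by
          apply Finset.sum_le_sum
          intro S hS
          have := Finset.prod_le_prod (f := fun _ : Fin n => (1 : ℝ)) (g := x)
            (fun j _ => by norm_num)
            (fun j hj => by
              have hjB : j ∈ B := (Finset.mem_powersetCard.mp hS).1 hj
              rw [hxB j hjB]; exact hge)
          simpa using this
      _ ≤ ∑ S ∈ T.powersetCard (i - 1), ∏ j ∈ S, x j := by
          apply Finset.sum_le_sum_of_subset_of_nonneg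
            (Finset.powersetCard_mono hBT)
          intro S _ _
          exact Finset.prod_nonneg fun j _ => (hxpos j).le
  have h1' : (∑ i ∈ Finset.Icc 1 (n - 2), (numDerangements (n - i) : ℝ) * (q.choose (i - 1) : ℝ))
      ≤ ∑ i ∈ Finset.Icc 1 (n - 2), (numDerangements (n - i) : ℝ) *
          ∑ S ∈ T.powersetCard (i - 1), ∏ j ∈ S, x j :=
    Finset.sum_le_sum h1
  -- Part 2 : sqrt sum bound
  have h2 : ∑ i ∈ T, Real.sqrt (x i) / (Real.sqrt (x K) + Real.sqrt (x L))
      ≤ (q : ℝ) / (Real.sqrt (x K / x L) + 1)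
          + (p : ℝ) * (Real.sqrt (x K / x L) / (Real.sqrt (x K / x L) + 1)) := by
    have e1 : (q : ℝ) / (Real.sqrt (x K / x L) + 1)
        = (q : ℝ) * (Real.sqrt (x L) / (Real.sqrt (x K) + Real.sqrt (x L))) := by
      rw [hy]; field_simp
    have e2 : Real.sqrt (x K / x L) / (Real.sqrt (x K / x L) + 1)
        = Real.sqrt (x K) / (Real.sqrt (x K) + Real.sqrt (x L)) := by
      rw [hy, div_add' _ _ _ hsb.ne', div_div_div_cancel_right₀]
      · ring_nf
      · exact hsb.ne'
    rw [e1, e2, hTAB, Finset.sum_union hdisj]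
    have hBsum : ∑ i ∈ B, Real.sqrt (x i) / (Real.sqrt (x K) + Real.sqrt (x L))
        = (q : ℝ) * (Real.sqrt (x L) / (Real.sqrt (x K) + Real.sqrt (x L))) := by
      rw [Finset.sum_congr rfl (fun j hj => by rw [hxB j hj]),
        Finset.sum_const, hBcard, nsmul_eq_mul]
    have hAsum : ∑ i ∈ A, Real.sqrt (x i) / (Real.sqrt (x K) + Real.sqrt (x L))
        ≤ (p : ℝ) * (Real.sqrt (x K) / (Real.sqrt (x K) + Real.sqrt (x L))) := by
      calc ∑ i ∈ A, Real.sqrt (x i) / (Real.sqrt (x K) + Real.sqrt (x L))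
          ≤ ∑ _i ∈ A, Real.sqrt (x K) / (Real.sqrt (x K) + Real.sqrt (x L)) := by
            apply Finset.sum_le_sum
            intro j hj
            gcongr
            exact hxA j hj
        _ = (p : ℝ) * (Real.sqrt (x K) / (Real.sqrt (x K) + Real.sqrt (x L))) := by
            rw [Finset.sum_const, hAcard, nsmul_eq_mul]
    linarith [hBsum, hAsum]
  rw [ge_iff_le, Sfun]
  exact sub_le_sub h1' (mul_le_mul_of_nonneg_left h2 (Nat.cast_nonneg _))

/-- Let `n = 2ℓ` be even with `ℓ ≥ 2`, let `t ∈ {0, …, ℓ-2}`, and set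
`k = ℓ - t - 1` (so the paper's `1`-indexed coordinates `x_k, x_{k+1}, x_n` are the `0`-indexed
coordinates `ℓ-t-2, ℓ-t-1, 2ℓ-1`). If `0 < x_1 ≤ ⋯ ≤ x_n`, `x_k < x_{k+1} = ⋯ = x_n` and
`x_n ≥ 1`, then with `y = √(x_k / x_n)` we have `S_k(x) ≥ f(y, t)`, where
`f(y, t) = ∑_{i=1}^{n-2} c_{n-i} C(ℓ+t, i-1) − (n-2)! ((ℓ+t)/(y+1) + (ℓ-t-2) y/(y+1))`. -/
theorem S_k_ge_f (ℓ : ℕ) (hℓ : 2 ≤ ℓ) (t : ℕ) (ht : t ≤ ℓ - 2)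
    (x : Fin (2 * ℓ) → ℝ)
    (hpos : 0 < x ⟨0, by omega⟩) (hmono : Monotone x)
    (hlt : x ⟨ℓ - t - 2, by omega⟩ < x ⟨ℓ - t - 1, by omega⟩)
    (heq : ∀ j : Fin (2 * ℓ), ℓ - t - 1 ≤ (j : ℕ) → x j = x ⟨2 * ℓ - 1, by omega⟩)
    (hge : 1 ≤ x ⟨2 * ℓ - 1, by omega⟩) :
    Sfun (2 * ℓ) ⟨ℓ - t - 2, by omega⟩ ⟨2 * ℓ - 1, by omega⟩ x ≥
      (∑ i ∈ Finset.Icc 1 (2 * ℓ - 2),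
          (numDerangements (2 * ℓ - i) : ℝ) * ((ℓ + t).choose (i - 1) : ℝ))
        - ((2 * ℓ - 2).factorial : ℝ) *
            (((ℓ : ℝ) + t) /
                (Real.sqrt (x ⟨ℓ - t - 2, by omega⟩ / x ⟨2 * ℓ - 1, by omega⟩) + 1)
              + ((ℓ - t - 2 : ℕ) : ℝ) *
                (Real.sqrt (x ⟨ℓ - t - 2, by omega⟩ / x ⟨2 * ℓ - 1, by omega⟩) /
                  (Real.sqrt (x ⟨ℓ - t - 2, by omega⟩ / x ⟨2 * ℓ - 1, by omega⟩) + 1))) := by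
  have htℓ : t + 2 ≤ ℓ := by omega
  have hcast : ((ℓ : ℝ) + t) = ((ℓ + t : ℕ) : ℝ) := by push_cast; ring
  rw [hcast]
  refine Sfun_aux (2 * ℓ) ⟨ℓ - t - 2, by omega⟩ ⟨2 * ℓ - 1, by omega⟩ x
    ((Finset.range (ℓ - t - 2)).attachFin
      (fun m hm => by simp only [Finset.mem_range] at hm; omega))
    ((Finset.Ico (ℓ - t - 1) (2 * ℓ - 1)).attachFin
      (fun m hm => by simp only [Finset.mem_Ico] at hm; omega))
    (ℓ - t - 2) (ℓ + t)
    (fun j => lt_of_lt_of_le hpos (hmono (Fin.le_def.mpr (Nat.zero_le _))))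
    ?_ ?_ ?_ ?_ ?_ ?_ hge
  · ext j
    simp only [Finset.mem_erase, Finset.mem_union, Finset.mem_attachFin,
      Finset.mem_range, Finset.mem_Ico, Finset.mem_univ, and_true, Ne, Fin.ext_iff]
    have := j.isLt
    omega
  · rw [Finset.disjoint_left]
    intro j hjA hjB
    simp only [Finset.mem_attachFin, Finset.mem_range, Finset.mem_Ico] at hjA hjB
    omega
  · simp [Finset.card_attachFin]
  · simp only [Finset.card_attachFin, Nat.card_Ico]; omega
  · intro j hj
    simp only [Finset.mem_attachFin, Finset.mem_Ico] at hj
    exact heq j hj.1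
  · intro j hj
    simp only [Finset.mem_attachFin, Finset.mem_range] at hj
    exact hmono (Fin.le_def.mpr (show (j : ℕ) ≤ ℓ - t - 2 by omega))
end

section
/- Let n = 2ℓ be an even integer with ℓ ≥ 2. Then for all real y ∈ (0, 1] and all integers t ∈ {0, 1, …, ℓ−2}, we have f(y, t) > 0, where f(y, t) = ∑_{i=1}^{n−2} c_{n−i} C(ℓ+t, i−1) − (n−2)! ( (ℓ+t)/(y+1) + (ℓ−t−2) y/(y+1) ). -/
open Finset

/-- Auxiliary sum: `∑ j ≤ m, C(m,j) * c_{k-j}`. -/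
def derSum (k m : ℕ) : ℕ := ∑ j ∈ Finset.range (m+1), m.choose j * numDerangements (k - j)

lemma derSum_succ (k m : ℕ) : derSum k (m+1) = derSum k m + derSum (k-1) m := by
  unfold derSum
  rw [Finset.sum_range_succ' (fun j => (m+1).choose j * numDerangements (k - j)) (m+1),
      Finset.sum_range_succ' (fun j => m.choose j * numDerangements (k - j)) m]
  have h1 : ∀ j, (m+1).choose (j+1) * numDerangements (k - (j+1))
      = m.choose j * numDerangements (k-1-j) + m.choose (j+1) * numDerangements (k - (j+1)) := by
    intro j
    have h2 : k - (j+1) = k - 1 - j := by omega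
    rw [Nat.choose_succ_succ, add_mul, h2]
  simp only [h1, Finset.sum_add_distrib]
  rw [Finset.sum_range_succ (fun j => m.choose (j+1) * numDerangements (k - (j+1))) m]
  simp [Nat.choose_succ_self]
  ring

lemma TU (n : ℕ) :
    (∑ i ∈ range (n+1), n.choose i * numDerangements i) = n.factorial ∧
    (∑ i ∈ range (n+1), n.choose i * numDerangements (i+1)) = n * n.factorial := by
  induction n with
  | zero => simp [numDerangements]
  | succ n ih =>
    obtain ⟨hT, hU⟩ := ih
    have hT' : ∑ i ∈ range (n+2), (n+1).choose i * numDerangements i = (n+1).factorial := by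
      rw [Finset.sum_range_succ' (fun i => (n+1).choose i * numDerangements i) (n+1)]
      have h1 : ∀ i, (n+1).choose (i+1) * numDerangements (i+1)
          = n.choose i * numDerangements (i+1) + n.choose (i+1) * numDerangements (i+1) := by
        intro i; rw [Nat.choose_succ_succ, add_mul]
      simp only [h1, Finset.sum_add_distrib]
      have h2 : ∑ i ∈ range (n+1), n.choose (i+1) * numDerangements (i+1)
          + (n+1).choose 0 * numDerangements 0
          = ∑ i ∈ range (n+2), n.choose i * numDerangements i := by
        rw [Finset.sum_range_succ' (fun i => n.choose i * numDerangements i) (n+1)]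
        simp
      have h3 : ∑ i ∈ range (n+2), n.choose i * numDerangements i = n.factorial := by
        rw [Finset.sum_range_succ, hT, Nat.choose_succ_self]
        simp
      rw [add_assoc, h2, h3, hU, Nat.factorial_succ]
      ring
    refine ⟨hT', ?_⟩
    have key : ((∑ i ∈ range (n+2), (n+1).choose i * numDerangements (i+1) : ℕ) : ℤ)
        = ((n+1) * (n+1).factorial : ℕ) := by
      push_cast
      have h1 : ∀ i ∈ range (n+2), ((n+1).choose i : ℤ) * (numDerangements (i+1) : ℤ)
          = (i+1) * ((n+1).choose i * numDerangements i) - (n+1).choose i * (-1:ℤ)^i := by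
        intro i _
        rw [numDerangements_succ]
        ring
      rw [Finset.sum_congr rfl h1, Finset.sum_sub_distrib]
      have h2 : ∑ i ∈ range (n+2), ((n+1).choose i : ℤ) * (-1:ℤ)^i = 0 := by
        rw [← Int.alternating_sum_range_choose_of_ne (Nat.succ_ne_zero n)]
        exact Finset.sum_congr rfl fun i _ => by ring
      rw [h2, sub_zero]
      have h3 : ∀ i ∈ range (n+2), ((i:ℤ)+1) * ((n+1).choose i * numDerangements i)
          = ((n+1).choose i * numDerangements i) + i * ((n+1).choose i) * numDerangements i := by
        intro i _; ring
      rw [Finset.sum_congr rfl h3, Finset.sum_add_distrib]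
      have h4 : ∑ i ∈ range (n+2), ((n+1).choose i : ℤ) * numDerangements i
          = (n+1).factorial := by
        exact_mod_cast congrArg (Nat.cast : ℕ → ℤ) hT'
      have h5 : ∑ i ∈ range (n+2), (i:ℤ) * ((n+1).choose i) * numDerangements i
          = (n+1) * ((n:ℤ) * n.factorial) := by
        rw [Finset.sum_range_succ' (fun i => (i:ℤ) * ((n+1).choose i) * numDerangements i) (n+1)]
        have h6 : ∀ i ∈ range (n+1),
            ((i+1 : ℕ):ℤ) * ((n+1).choose (i+1)) * numDerangements (i+1)
            = ((n:ℤ)+1) * ((n.choose i : ℤ) * (numDerangements (i+1) : ℤ)) := by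
          intro i _
          have hnat : (i+1) * (n+1).choose (i+1) = (n+1) * n.choose i := by
            rw [mul_comm]; exact (Nat.add_one_mul_choose_eq n i).symm
          have hz : ((i+1 : ℕ):ℤ) * ((n+1).choose (i+1) : ℤ) = ((n:ℤ)+1) * (n.choose i : ℤ) := by
            exact_mod_cast congrArg (Nat.cast : ℕ → ℤ) hnat
          rw [hz]; ring
        rw [Finset.sum_congr rfl h6, ← Finset.mul_sum]
        have h7 : ∑ i ∈ range (n+1), ((n.choose i : ℤ)) * (numDerangements (i+1) : ℤ)
            = (n:ℤ) * n.factorial := by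
          exact_mod_cast congrArg (Nat.cast : ℕ → ℤ) hU
        simp [h7]
      rw [h4, h5]
      push_cast [Nat.factorial_succ]
      ring
    exact_mod_cast key

lemma derSum_diag (n : ℕ) : derSum n n = n.factorial := by
  rw [← (TU n).1]
  unfold derSum
  rw [← Finset.sum_range_reflect (fun j => n.choose j * numDerangements j) (n+1)]
  refine Finset.sum_congr rfl fun j hj => ?_
  rw [Finset.mem_range] at hj
  have h1 : n + 1 - 1 - j = n - j := by omega
  rw [h1, Nat.choose_symm (by omega : j ≤ n)]

lemma derSum_bounds (r : ℕ) : ∀ s : ℕ,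
    (r+s+1).factorial * (s+2) ≤ derSum (r+s+2) (s+2) ∧
    derSum (r+s+2) (s+2) ≤ (r+s+1).factorial * (s+2) + r*r*(r+s).factorial := by
  induction r with
  | zero =>
    intro s
    simp only [Nat.zero_add, zero_mul, Nat.add_zero, Nat.zero_mul, add_zero]
    rw [derSum_diag (s+2)]
    constructor
    · rw [Nat.factorial_succ (s+1)]; ring_nf; exact le_refl _
    · rw [Nat.factorial_succ (s+1)]; ring_nf; exact le_refl _
  | succ r ih =>
    intro s
    have e1 : r + 1 + s + 2 = r + s + 3 := by omega
    have e2 : r + 1 + s + 1 = r + s + 2 := by omega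
    have e3 : r + 1 + s = r + s + 1 := by omega
    rw [e1, e2, e3]
    have hrec : derSum (r+s+3) (s+3) = derSum (r+s+3) (s+2) + derSum (r+s+2) (s+2) := by
      have := derSum_succ (r+s+3) (s+2)
      simpa using this
    obtain ⟨hL1, hU1⟩ := ih (s+1)
    obtain ⟨hL0, hU0⟩ := ih s
    simp only [show s+1+2 = s+3 from rfl, show r+(s+1) = r+s+1 from by omega] at hL1 hU1
    have fact1 : (r+s+2).factorial = (r+s+2) * ((r+s+1) * (r+s).factorial) := by
      rw [Nat.factorial_succ, Nat.factorial_succ]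
    have fact2 : (r+s+1).factorial = (r+s+1) * (r+s).factorial := Nat.factorial_succ _
    have hA : (r+s+2).factorial * (s+2) + ((r+s+1).factorial * (s+2) + r*r*(r+s).factorial)
        ≤ (r+s+2).factorial * (s+3) := by
      have hq : (r+s+1)*(s+2) + r*r ≤ (r+s+2)*(r+s+1) := by nlinarith
      have h := Nat.mul_le_mul_right (r+s).factorial hq
      rw [fact1, fact2]
      ring_nf at h ⊢
      linarith
    have hB : (r+s+2).factorial * (s+3) + r*r*(r+s+1).factorial
        ≤ (r+s+2).factorial * (s+2) + (r+1)*(r+1)*(r+s+1).factorial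
          + (r+s+1).factorial * (s+2) := by
      have fact3 : (r+s+2).factorial = (r+s+2) * (r+s+1).factorial := Nat.factorial_succ _
      have hq : (r+s+2) + r*r ≤ (r+1)*(r+1) + (s+2) := by nlinarith
      have h := Nat.mul_le_mul_right (r+s+1).factorial hq
      rw [fact3]
      ring_nf at h ⊢
      linarith
    constructor
    · linarith [hU0, hrec, hA, hL1]
    · linarith [hL0, hrec, hB, hU1]

/-- Let `n = 2ℓ` be even with `ℓ ≥ 2`. Then for all real `y ∈ (0, 1]` and all
integers `t ∈ {0, …, ℓ-2}`, we have `f(y, t) > 0`, where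
`f(y, t) = ∑_{i=1}^{n-2} c_{n-i} C(ℓ+t, i-1) − (n-2)! ((ℓ+t)/(y+1) + (ℓ-t-2) y/(y+1))` and
`c_j = numDerangements j`. -/
theorem f_pos (ℓ : ℕ) (hℓ : 2 ≤ ℓ) (y : ℝ) (hy0 : 0 < y) (hy1 : y ≤ 1)
    (t : ℕ) (ht : t ≤ ℓ - 2) :
    0 < (∑ i ∈ Finset.Icc 1 (2 * ℓ - 2),
          (numDerangements (2 * ℓ - i) : ℝ) * ((ℓ + t).choose (i - 1) : ℝ))
        - ((2 * ℓ - 2).factorial : ℝ) *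
            (((ℓ : ℝ) + t) / (y + 1) + ((ℓ - t - 2 : ℕ) : ℝ) * (y / (y + 1))) := by
  have htℓ : t + 2 ≤ ℓ := by omega
  -- identify the sum with `derSum (2ℓ-1) (ℓ+t)`
  have hnat : (∑ i ∈ Finset.Icc 1 (2*ℓ-2), numDerangements (2*ℓ - i) * (ℓ+t).choose (i-1))
      = derSum (2*ℓ-1) (ℓ+t) := by
    have key : derSum (2*ℓ-1) (ℓ+t)
        = ∑ i ∈ Finset.range (2*ℓ-1), (ℓ+t).choose i * numDerangements (2*ℓ-1-i) := by
      unfold derSum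
      apply Finset.sum_subset
      · exact Finset.range_subset_range.mpr (by omega)
      · intro x _ hx
        rw [Finset.mem_range, not_lt] at hx
        rw [Nat.choose_eq_zero_of_lt (by omega), zero_mul]
    have h2 : ∑ i ∈ Finset.range (2*ℓ-1), (ℓ+t).choose i * numDerangements (2*ℓ-1-i)
        = ∑ i ∈ Finset.range (2*ℓ-2), (ℓ+t).choose i * numDerangements (2*ℓ-1-i) := by
      rw [show 2*ℓ-1 = (2*ℓ-2)+1 from by omega, Finset.sum_range_succ]
      rw [show 2*ℓ-2+1-(2*ℓ-2) = 1 from by omega]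
      simp [numDerangements]
    have h3 : ∑ i ∈ Finset.Icc 1 (2*ℓ-2), numDerangements (2*ℓ - i) * (ℓ+t).choose (i-1)
        = ∑ i ∈ Finset.range (2*ℓ-2), (ℓ+t).choose i * numDerangements (2*ℓ-1-i) := by
      rw [← Finset.Ico_add_one_right_eq_Icc, Finset.sum_Ico_eq_sum_range]
      refine Finset.sum_congr (by congr 1) fun i _ => ?_
      rw [mul_comm, show 1+i-1 = i from by omega, show 2*ℓ-(1+i) = 2*ℓ-1-i from by omega]
    rw [h3, key, h2]
  have hbound : (2*ℓ-2).factorial * (ℓ+t) ≤ derSum (2*ℓ-1) (ℓ+t) := by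
    have h := (derSum_bounds (ℓ-1-t) (ℓ+t-2)).1
    rw [show (ℓ-1-t)+(ℓ+t-2)+1 = 2*ℓ-2 from by omega,
        show (ℓ-1-t)+(ℓ+t-2)+2 = 2*ℓ-1 from by omega,
        show (ℓ+t-2)+2 = ℓ+t from by omega] at h
    exact h
  have hcast : (∑ i ∈ Finset.Icc 1 (2 * ℓ - 2),
        (numDerangements (2 * ℓ - i) : ℝ) * ((ℓ + t).choose (i - 1) : ℝ))
      = ((derSum (2*ℓ-1) (ℓ+t) : ℕ) : ℝ) := by
    rw [← hnat]
    push_cast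
    ring
  have hyp : (0:ℝ) < y + 1 := by linarith
  have hK : (0:ℝ) < ((2*ℓ-2).factorial : ℝ) := by
    exact_mod_cast Nat.factorial_pos _
  have ha : ((ℓ-t-2:ℕ):ℝ) < (ℓ:ℝ)+t := by
    have h : (ℓ-t-2) < ℓ + t := by omega
    exact_mod_cast h
  have hE : ((ℓ:ℝ)+t)/(y+1) + ((ℓ-t-2:ℕ):ℝ)*(y/(y+1)) < (ℓ:ℝ)+t := by
    have heq : ((ℓ:ℝ)+t)/(y+1) + ((ℓ-t-2:ℕ):ℝ)*(y/(y+1))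
        = (((ℓ:ℝ)+t) + ((ℓ-t-2:ℕ):ℝ)*y)/(y+1) := by
      field_simp
    rw [heq, div_lt_iff₀ hyp]
    nlinarith [mul_lt_mul_of_pos_right ha hy0]
  have hSm : ((2*ℓ-2).factorial : ℝ) * ((ℓ:ℝ)+t)
      ≤ ((derSum (2*ℓ-1) (ℓ+t) : ℕ) : ℝ) := by
    calc ((2*ℓ-2).factorial : ℝ) * ((ℓ:ℝ)+t)
        = ((((2*ℓ-2).factorial * (ℓ+t)) : ℕ) : ℝ) := by push_cast; ring
      _ ≤ _ := Nat.cast_le.mpr hbound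
  have hfin := mul_lt_mul_of_pos_left hE hK
  rw [hcast]
  linarith
end

section
/- For any integer n ≥ 3, the identity ∑_{i=1}^{n−2} c_{n−i} C(n−2, i−1) = (n−2)! (n−2) holds. -/
lemma derangements_choose_sum (n : ℕ) :
    ∑ k ∈ Finset.range (n + 1), (numDerangements k : ℤ) * n.choose k = n.factorial := by
  induction n with
  | zero => simp
  | succ n ih =>
    rw [Finset.sum_range_succ']
    have hterm : ∀ k ∈ Finset.range (n + 1),
        (numDerangements (k + 1) : ℤ) * (n + 1).choose (k + 1) =
          (n + 1) * ((numDerangements k : ℤ) * n.choose k)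
            - (-1 : ℤ) ^ k * (n + 1).choose (k + 1) := by
      intro k _
      have hc : ((n + 1).choose (k + 1) * (k + 1) : ℤ) = (n + 1) * n.choose k := by
        exact_mod_cast (Nat.add_one_mul_choose_eq n k).symm
      rw [numDerangements_succ]
      push_cast
      nlinarith [hc]
    rw [Finset.sum_congr rfl hterm, Finset.sum_sub_distrib, ← Finset.mul_sum, ih]
    have halt : ∑ i ∈ Finset.range (n + 2), (-1 : ℤ) ^ i * (n + 1).choose i = 0 := by
      rw [Int.alternating_sum_range_choose]
      simp
    rw [Finset.sum_range_succ'] at halt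
    have hS : ∑ k ∈ Finset.range (n + 1), (-1 : ℤ) ^ k * (n + 1).choose (k + 1) = 1 := by
      simp only [pow_succ, pow_zero, mul_neg, mul_one, neg_mul, one_mul, Nat.choose_zero_right, Nat.cast_one, Finset.sum_neg_distrib] at halt
      linarith [halt]
    rw [hS]
    simp only [numDerangements_zero, Nat.choose_zero_right, Nat.cast_one, mul_one,
      Nat.factorial_succ]
    push_cast
    ring

lemma derangements_succ_choose_sum (n : ℕ) :
    ∑ k ∈ Finset.range (n + 1), (numDerangements (k + 1) : ℤ) * n.choose k =
      n.factorial * n := by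
  have hA := derangements_choose_sum n
  have hA1 := derangements_choose_sum (n + 1)
  rw [Finset.sum_range_succ'] at hA1 hA
  simp only [Nat.choose_succ_succ, Nat.cast_add, mul_add, Finset.sum_add_distrib] at hA1
  have h0 : ∑ k ∈ Finset.range (n + 1), (numDerangements (k + 1) : ℤ) * n.choose (k + 1)
      = ∑ k ∈ Finset.range n, (numDerangements (k + 1) : ℤ) * n.choose (k + 1) := by
    rw [Finset.sum_range_succ, Nat.choose_succ_self]
    simp
  rw [h0] at hA1
  simp only [numDerangements_zero, Nat.choose_zero_right, Nat.cast_one, mul_one,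
    Nat.factorial_succ] at hA1 hA ⊢
  push_cast at hA1 ⊢
  nlinarith [hA, hA1]

/-- For any integer `n ≥ 3`, `∑_{i=1}^{n-2} c_{n-i} C(n-2, i-1) = (n-2)! (n-2)`,
where `c_j = numDerangements j`. -/
theorem derangement_identity (n : ℕ) (hn : 3 ≤ n) :
    ∑ i ∈ Finset.Icc 1 (n - 2), numDerangements (n - i) * (n - 2).choose (i - 1) =
      (n - 2).factorial * (n - 2) := by
  obtain ⟨m, rfl⟩ : ∃ m, n = m + 2 := ⟨n - 2, by omega⟩
  have hm : m + 2 - 2 = m := by omega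
  rw [hm]
  have key : ∑ k ∈ Finset.range (m + 1), numDerangements (k + 1) * m.choose k =
      m.factorial * m := by
    have := derangements_succ_choose_sum m
    exact_mod_cast this
  rw [← key]
  rw [Finset.sum_range_succ']
  simp only [Nat.zero_add, numDerangements_one, Nat.cast_zero, zero_mul, add_zero]
  -- now: ∑ i ∈ Icc 1 m, D (m+2-i) * C(m, i-1) = ∑ k ∈ range m, D(k+2) * C(m, k+1)
  apply Finset.sum_nbij' (fun i => m - i) (fun k => m - k)
  · intro i hi; simp at hi ⊢; omega
  · intro k hk; simp at hk ⊢; omega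
  · intro i hi; simp at hi ⊢; omega
  · intro k hk; simp at hk ⊢; omega
  · intro i hi
    simp only [Finset.mem_Icc] at hi
    have h1 : m + 2 - i = m - i + 2 := by omega
    have h2 : i - 1 = m - (m - i + 1) := by omega
    rw [h1, h2, Nat.choose_symm (by omega)]
end

section
/- Let n = 2ℓ be an even integer with ℓ ≥ 3. Then for every integer t with 1 ≤ t ≤ ℓ−2, we have f(0, t−1) > f(0, t); equivalently, ∑_{i=2}^{n−2} c_{n−i} C(ℓ+t−1, i−2) < (n−2)!. Here f(0, s) = ∑_{i=1}^{n−2} c_{n−i} C(ℓ+s, i−1) − (n−2)! (ℓ+s). -/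
open Finset Equiv


lemma fiber_card (n : ℕ) (s : Finset (Fin n)) :
    (Finset.univ.filter (fun σ : Perm (Fin n) =>
      Finset.univ.filter (fun x => σ x = x) = s)).card = numDerangements (n - s.card) := by
  classical
  rw [← Fintype.card_subtype]
  have e : {σ : Perm (Fin n) // Finset.univ.filter (fun x => σ x = x) = s}
      ≃ derangements {a : Fin n // a ∉ s} := by
    refine (Equiv.subtypeEquivRight ?_).trans (derangements.subtypeEquiv (fun a : Fin n => a ∉ s)).symm
    intro f
    rw [Finset.ext_iff]
    simp [Function.fixedPoints, Function.IsFixedPt, not_not, Iff.comm]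
  rw [Fintype.card_congr e, card_derangements_eq_numDerangements]
  congr 1
  rw [Fintype.card_subtype_compl, Fintype.card_fin, Fintype.card_coe]

lemma key (n : ℕ) :
    ∑ k ∈ Finset.range (n + 1), n.choose k * numDerangements (n - k) = n.factorial := by
  classical
  have h := Finset.card_eq_sum_card_fiberwise
    (f := fun σ : Perm (Fin n) => Finset.univ.filter (fun x => σ x = x))
    (s := Finset.univ) (t := Finset.univ) (fun _ _ => Finset.mem_univ _)
  rw [Finset.card_univ, Fintype.card_perm, Fintype.card_fin] at h
  rw [h]
  have : (Finset.univ : Finset (Finset (Fin n))) = Finset.univ.powerset := by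
    simp [Finset.powerset_univ]
  rw [this, Finset.sum_powerset]
  simp only [Finset.card_univ, Fintype.card_fin]
  refine Finset.sum_congr rfl fun k hk => ?_
  rw [Finset.sum_congr rfl (fun s hs => ?_), Finset.sum_const, Finset.card_powersetCard,
    Finset.card_univ, Fintype.card_fin, smul_eq_mul]
  · rw [fiber_card, (Finset.mem_powersetCard.mp hs).2]

/-- the strict inequality part -/
lemma S_lt (ℓ : ℕ) (hℓ : 3 ≤ ℓ) (m : ℕ) (hm : m ≤ 2 * ℓ - 3) :
    ∑ i ∈ Finset.Icc 2 (2 * ℓ - 2), numDerangements (2 * ℓ - i) * m.choose (i - 2) <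
      (2 * ℓ - 2).factorial := by
  set N := 2 * ℓ - 2 with hN
  have hN4 : 4 ≤ N := by omega
  -- reindex to range (N - 1)
  have hre : ∑ i ∈ Finset.Icc 2 N, numDerangements (2 * ℓ - i) * m.choose (i - 2)
      = ∑ j ∈ Finset.range (N - 1), numDerangements (N - j) * m.choose j := by
    refine Finset.sum_nbij' (fun i => i - 2) (fun j => j + 2) ?_ ?_ ?_ ?_ ?_
    · intro i hi; simp only [Finset.mem_Icc] at hi; simp only [Finset.mem_range]; omega
    · intro j hj; simp only [Finset.mem_range] at hj; simp only [Finset.mem_Icc]; omega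
    · intro i hi; simp only [Finset.mem_Icc] at hi; show i - 2 + 2 = i; omega
    · intro j hj; show j + 2 - 2 = j; omega
    · intro i hi
      simp only [Finset.mem_Icc] at hi
      have : 2 * ℓ - i = N - (i - 2) := by omega
      rw [this]
  rw [hre]
  calc ∑ j ∈ Finset.range (N - 1), numDerangements (N - j) * m.choose j
      ≤ ∑ j ∈ Finset.range (N - 1), numDerangements (N - j) * N.choose j := by
        refine Finset.sum_le_sum fun j _ => ?_
        exact Nat.mul_le_mul_left _ (Nat.choose_le_choose j (by omega))
    _ ≤ N.factorial - 1 := by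
        have hfull : ∑ j ∈ Finset.range (N + 1), N.choose j * numDerangements (N - j)
            = N.factorial := key N
        obtain ⟨k, hk⟩ : ∃ k, N = k + 2 := ⟨N - 2, by omega⟩
        have hsplit : ∑ j ∈ Finset.range (N + 1), N.choose j * numDerangements (N - j)
            = (∑ j ∈ Finset.range (N - 1), N.choose j * numDerangements (N - j))
              + N.choose (N - 1) * numDerangements (N - (N - 1))
              + N.choose N * numDerangements (N - N) := by
          rw [hk]
          rw [show k + 2 + 1 = (k + 1) + 1 + 1 from rfl, Finset.sum_range_succ,
            Finset.sum_range_succ]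
          congr 2 <;> omega
        have h1 : numDerangements (N - (N - 1)) = 0 := by
          have : N - (N - 1) = 1 := by omega
          rw [this, numDerangements_one]
        have h2 : N.choose N * numDerangements (N - N) = 1 := by simp
        rw [hsplit, h1, h2, mul_zero, add_zero] at hfull
        have : ∑ j ∈ Finset.range (N - 1), numDerangements (N - j) * N.choose j
            = ∑ j ∈ Finset.range (N - 1), N.choose j * numDerangements (N - j) := by
          refine Finset.sum_congr rfl fun j _ => Nat.mul_comm _ _
        omega
    _ < N.factorial := by
        have := Nat.factorial_pos N
        omega

/-- Pascal split of the sum, in ℕ. -/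
lemma sum_split (ℓ t : ℕ) (hℓ : 3 ≤ ℓ) (ht1 : 1 ≤ t) :
    ∑ i ∈ Finset.Icc 1 (2 * ℓ - 2), numDerangements (2 * ℓ - i) * (ℓ + t).choose (i - 1)
      = (∑ i ∈ Finset.Icc 1 (2 * ℓ - 2),
          numDerangements (2 * ℓ - i) * (ℓ + (t - 1)).choose (i - 1))
        + ∑ i ∈ Finset.Icc 2 (2 * ℓ - 2),
            numDerangements (2 * ℓ - i) * (ℓ + t - 1).choose (i - 2) := by
  set N := 2 * ℓ - 2 with hN
  have hsplit : Finset.Icc 1 N = insert 1 (Finset.Icc 2 N) := by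
    ext x; simp only [Finset.mem_Icc, Finset.mem_insert]; omega
  have h1 : (1 : ℕ) ∉ Finset.Icc 2 N := by simp
  rw [hsplit, Finset.sum_insert h1, Finset.sum_insert h1]
  have hterm : ∀ i ∈ Finset.Icc 2 N,
      numDerangements (2 * ℓ - i) * (ℓ + t).choose (i - 1)
        = numDerangements (2 * ℓ - i) * (ℓ + (t - 1)).choose (i - 1)
          + numDerangements (2 * ℓ - i) * (ℓ + t - 1).choose (i - 2) := by
    intro i hi
    simp only [Finset.mem_Icc] at hi
    set m := ℓ + t - 1 with hm
    have e : ℓ + t = m + 1 := by omega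
    have e' : ℓ + (t - 1) = m := by omega
    have e2 : i - 1 = (i - 2) + 1 := by omega
    rw [e, e', e2, Nat.choose_succ_succ, mul_add]
    ring
  rw [Finset.sum_congr rfl hterm, Finset.sum_add_distrib]
  have : (ℓ + t).choose (1 - 1) = (ℓ + (t - 1)).choose (1 - 1) := by simp
  rw [this]; ring

/-- `f(0, s) = ∑_{i=1}^{n-2} c_{n-i} C(ℓ+s, i-1) − (n-2)! (ℓ+s)` for `n = 2ℓ`,
where `c_j = numDerangements j`. -/
noncomputable def fZero (ℓ s : ℕ) : ℝ :=
  (∑ i ∈ Finset.Icc 1 (2 * ℓ - 2),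
      (numDerangements (2 * ℓ - i) : ℝ) * ((ℓ + s).choose (i - 1) : ℝ))
    - ((2 * ℓ - 2).factorial : ℝ) * ((ℓ : ℝ) + s)

/-- Let `n = 2ℓ` be even with `ℓ ≥ 3`. For every integer `1 ≤ t ≤ ℓ-2`, we
have `f(0, t-1) > f(0, t)`; equivalently, `∑_{i=2}^{n-2} c_{n-i} C(ℓ+t-1, i-2) < (n-2)!`. -/
theorem fZero_strict_anti (ℓ : ℕ) (hℓ : 3 ≤ ℓ) (t : ℕ) (ht1 : 1 ≤ t) (ht2 : t ≤ ℓ - 2) :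
    fZero ℓ t < fZero ℓ (t - 1) ∧
    ∑ i ∈ Finset.Icc 2 (2 * ℓ - 2),
        numDerangements (2 * ℓ - i) * (ℓ + t - 1).choose (i - 2) <
      (2 * ℓ - 2).factorial := by
  have hS : ∑ i ∈ Finset.Icc 2 (2 * ℓ - 2),
      numDerangements (2 * ℓ - i) * (ℓ + t - 1).choose (i - 2) < (2 * ℓ - 2).factorial :=
    S_lt ℓ hℓ (ℓ + t - 1) (by omega)
  refine ⟨?_, hS⟩
  have hsum := sum_split ℓ t hℓ ht1
  -- cast to ℝ
  have hsumR : (∑ i ∈ Finset.Icc 1 (2 * ℓ - 2),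
      (numDerangements (2 * ℓ - i) : ℝ) * ((ℓ + t).choose (i - 1) : ℝ))
      = (∑ i ∈ Finset.Icc 1 (2 * ℓ - 2),
          (numDerangements (2 * ℓ - i) : ℝ) * ((ℓ + (t - 1)).choose (i - 1) : ℝ))
        + ((∑ i ∈ Finset.Icc 2 (2 * ℓ - 2),
            numDerangements (2 * ℓ - i) * (ℓ + t - 1).choose (i - 2) : ℕ) : ℝ) := by
    exact_mod_cast congrArg (Nat.cast : ℕ → ℝ) hsum
  have hcast : ((t - 1 : ℕ) : ℝ) = (t : ℝ) - 1 := by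
    rw [Nat.cast_sub ht1, Nat.cast_one]
  have hSR : ((∑ i ∈ Finset.Icc 2 (2 * ℓ - 2),
      numDerangements (2 * ℓ - i) * (ℓ + t - 1).choose (i - 2) : ℕ) : ℝ)
      < ((2 * ℓ - 2).factorial : ℝ) := by exact_mod_cast hS
  unfold fZero
  rw [hsumR, hcast]
  push_cast at hSR ⊢
  linarith
end

section
/- Let n = 2ℓ + 1 be an odd integer with ℓ ≥ 2. Then for all real y ∈ (0, 1] and all integers t ∈ {1, …, ℓ−1}, we have g(y, t) > 0, where g(y, t) = ∑_{i=1}^{n−2} c_{n−i} C(ℓ+t, i−1) − (n−2)! ( (ℓ+t)/(y+1) + (ℓ−t−1) y/(y+1) ). -/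
open Finset

/-- `AA N m = ∑_{j=0}^{N} C(m,j) c_{N-j}`, the number of permutations of an `N`-set whose
fixed points all lie in a given `m`-subset. -/
def AA (N m : ℕ) : ℕ := ∑ j ∈ range (N+1), m.choose j * numDerangements (N - j)

/-- `TT N = ∑_{j=0}^{N} C(N,j) c_{N-j+1}`. -/
def TT (N : ℕ) : ℕ := ∑ j ∈ range (N+1), N.choose j * numDerangements (N - j + 1)

lemma AA_rec (N m : ℕ) : AA (N+1) (m+1) = AA (N+1) m + AA N m := by
  simp only [AA, Finset.sum_range_succ' _ (N+1), Nat.choose_succ_succ, add_mul,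
    Finset.sum_add_distrib, Nat.succ_sub_succ, Nat.choose_zero_right]
  ring

lemma AA_succ_self (N : ℕ) : AA (N+1) N = TT N := by
  simp only [AA, TT, Finset.sum_range_succ _ (N+1)]
  rw [Nat.choose_eq_zero_of_lt (by omega), zero_mul, add_zero]
  apply Finset.sum_congr rfl
  intro j hj
  simp only [mem_range] at hj
  congr 2
  omega

lemma alt_zero (N : ℕ) : ∑ j ∈ range (N+2), ((N+1).choose j : ℤ) * (-1)^(N+1-j) = 0 := by
  have h := Finset.sum_range_reflect (fun j => ((N+1).choose j : ℤ) * (-1)^(N+1-j)) (N+2)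
  simp only [show N+2-1 = N+1 from rfl] at h
  rw [← h]
  have : ∀ j ∈ range (N+2), ((N+1).choose (N+1-j) : ℤ) * (-1)^(N+1-(N+1-j)) =
      (-1)^j * ((N+1).choose j : ℤ) := by
    intro j hj
    simp only [mem_range] at hj
    rw [Nat.choose_symm (by omega), show N+1-(N+1-j) = j by omega, mul_comm]
  rw [Finset.sum_congr rfl this, Int.alternating_sum_range_choose_of_ne (by omega)]

lemma TT_rec (N : ℕ) : (TT (N+1) : ℤ) = (N+1) * TT N + AA (N+1) (N+1) := by
  have step : ∀ j ∈ range (N+2), ((N+1).choose j : ℤ) * (numDerangements (N+1-j+1) : ℤ)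
      = (N+1) * ((N.choose j : ℤ) * numDerangements (N+1-j))
        + ((N+1).choose j : ℤ) * numDerangements (N+1-j)
        - ((N+1).choose j : ℤ) * (-1)^(N+1-j) := by
    intro j hj
    simp only [mem_range] at hj
    rw [numDerangements_succ (N+1-j)]
    have h1 : (N+1).choose j * (N+1-j) = (N+1) * N.choose j := by
      rw [← Nat.choose_succ_right_eq]
      exact (Nat.add_one_mul_choose_eq N j).symm
    have h1' : ((N+1).choose j : ℤ) * ((N+1-j : ℕ) : ℤ) = (N+1) * (N.choose j : ℤ) := by
      exact_mod_cast congrArg (fun x : ℕ => (x : ℤ)) h1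
    push_cast at h1' ⊢
    ring_nf
    ring_nf at h1'
    nlinarith [h1']
  have hT : (TT (N+1) : ℤ)
      = ∑ j ∈ range (N+2), ((N+1).choose j : ℤ) * (numDerangements (N+1-j+1)) := by
    simp [TT]
  rw [hT, Finset.sum_congr rfl step]
  simp only [Finset.sum_sub_distrib, Finset.sum_add_distrib, ← Finset.mul_sum, alt_zero, sub_zero]
  have hAA : (AA (N+1) (N+1) : ℤ)
      = ∑ j ∈ range (N+2), ((N+1).choose j : ℤ) * numDerangements (N+1-j) := by
    simp [AA]
  have hTT : (TT N : ℤ) = ∑ j ∈ range (N+2), (N.choose j : ℤ) * numDerangements (N+1-j) := by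
    rw [Finset.sum_range_succ, Nat.choose_eq_zero_of_lt (by omega)]
    simp only [Nat.cast_zero, zero_mul, add_zero, TT]
    push_cast
    apply Finset.sum_congr rfl
    intro j hj
    simp only [mem_range] at hj
    rw [show N+1-j = N-j+1 by omega]
  rw [hAA, hTT]

lemma AA_TT_self (N : ℕ) : AA N N = N.factorial ∧ TT N = N * N.factorial := by
  induction N with
  | zero => constructor <;> decide
  | succ N ih =>
    obtain ⟨hA, hT⟩ := ih
    have hA' : AA (N+1) (N+1) = (N+1).factorial := by
      rw [AA_rec, AA_succ_self, hA, hT, Nat.factorial_succ]; ring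
    refine ⟨hA', ?_⟩
    have h1 := TT_rec N
    rw [hT, hA'] at h1
    have h2 : (TT (N+1) : ℤ) = ((N+1) * (N+1).factorial : ℕ) := by
      rw [h1]; push_cast [Nat.factorial_succ]; ring
    exact_mod_cast h2

lemma AA_self (N : ℕ) : AA N N = N.factorial := (AA_TT_self N).1

lemma AA_mono (N : ℕ) {m m' : ℕ} (h : m ≤ m') : AA N m ≤ AA N m' :=
  Finset.sum_le_sum fun j _ => Nat.mul_le_mul_right _ (Nat.choose_le_choose j h)

lemma AA_le (N m : ℕ) (h : m ≤ N) : AA N m ≤ N.factorial :=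
  (AA_mono N h).trans_eq (AA_self N)

lemma AA_lower (d N : ℕ) (h : d ≤ N) :
    N.factorial ≤ AA N (N - d) + d * (N-1).factorial := by
  induction d with
  | zero => simp [AA_self]
  | succ d ih =>
    have hd : d ≤ N := by omega
    obtain ⟨N', rfl⟩ : ∃ N', N = N' + 1 := ⟨N - 1, by omega⟩
    have key : AA (N'+1) (N'+1-d) ≤ AA (N'+1) (N'+1-(d+1)) + N'.factorial := by
      have hm : N'+1-(d+1) + 1 = N'+1-d := by omega
      have h3 := AA_rec N' (N'+1-(d+1))
      rw [hm] at h3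
      rw [h3]
      have : AA N' (N'+1-(d+1)) ≤ N'.factorial := AA_le _ _ (by omega)
      omega
    have h4 := ih hd
    have hd2 : (d+1) * N'.factorial = d * N'.factorial + N'.factorial := by ring
    simp only [Nat.add_sub_cancel] at *
    omega

lemma sum_eq_AA (ℓ t : ℕ) (hℓ : 2 ≤ ℓ) (ht : t ≤ ℓ - 1) :
    ∑ i ∈ Finset.Icc 1 (2*ℓ+1-2), numDerangements (2*ℓ+1-i) * (ℓ+t).choose (i-1)
      = AA (2*ℓ) (ℓ+t) := by
  rw [show (2*ℓ+1-2) = 2*ℓ-1 by omega, ← Finset.Ico_add_one_right_eq_Icc, show 2*ℓ-1+1 = 2*ℓ by omega,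
    Finset.sum_Ico_eq_sum_range, show 2*ℓ-1 = 2*ℓ-1 by omega]
  rw [AA, show 2*ℓ+1 = 2*ℓ-1+1+1 by omega, Finset.sum_range_succ, Finset.sum_range_succ]
  rw [Nat.choose_eq_zero_of_lt (show ℓ+t < 2*ℓ-1+1 by omega), zero_mul, add_zero]
  rw [show 2*ℓ - (2*ℓ-1) = 1 by omega, numDerangements_one, mul_zero, add_zero]
  apply Finset.sum_congr rfl
  intro j hj
  simp only [mem_range] at hj
  rw [show 1+j-1 = j by omega, show 2*ℓ-1+1+1-(1+j) = 2*ℓ-j by omega, mul_comm]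

/-- Let `n = 2ℓ + 1` be odd with `ℓ ≥ 2`. Then for all real `y ∈ (0, 1]` and
all integers `t ∈ {1, …, ℓ-1}`, we have `g(y, t) > 0`, where
`g(y, t) = ∑_{i=1}^{n-2} c_{n-i} C(ℓ+t, i-1) − (n-2)! ((ℓ+t)/(y+1) + (ℓ-t-1) y/(y+1))` and
`c_j = numDerangements j`. -/
theorem g_pos (ℓ : ℕ) (hℓ : 2 ≤ ℓ) (y : ℝ) (hy0 : 0 < y) (hy1 : y ≤ 1)
    (t : ℕ) (ht1 : 1 ≤ t) (ht2 : t ≤ ℓ - 1) :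
    0 < (∑ i ∈ Finset.Icc 1 (2 * ℓ + 1 - 2),
          (numDerangements (2 * ℓ + 1 - i) : ℝ) * ((ℓ + t).choose (i - 1) : ℝ))
        - ((2 * ℓ + 1 - 2).factorial : ℝ) *
            (((ℓ : ℝ) + t) / (y + 1) + ((ℓ - t - 1 : ℕ) : ℝ) * (y / (y + 1))) := by
  have htℓ : t + 1 ≤ ℓ := by omega
  -- Identify the sum with AA (2ℓ) (ℓ+t)
  have hsum : (∑ i ∈ Finset.Icc 1 (2 * ℓ + 1 - 2),
        (numDerangements (2 * ℓ + 1 - i) : ℝ) * ((ℓ + t).choose (i - 1) : ℝ))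
      = (AA (2*ℓ) (ℓ+t) : ℝ) := by
    rw [← sum_eq_AA ℓ t hℓ ht2]
    push_cast
    rfl
  -- Lower bound for AA
  have hkey := AA_lower (ℓ - t) (2*ℓ) (by omega)
  rw [show 2*ℓ - (ℓ - t) = ℓ + t by omega] at hkey
  have hfac : ((2*ℓ).factorial : ℝ) = (2*(ℓ:ℝ)) * ((2*ℓ-1).factorial : ℝ) := by
    rw [show 2*ℓ = (2*ℓ-1)+1 by omega, Nat.factorial_succ]
    push_cast
    rw [show ((2*ℓ-1 : ℕ) : ℝ) = 2*(ℓ:ℝ) - 1 by push_cast [Nat.cast_sub (by omega : 1 ≤ 2*ℓ)]; ring]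
    ring
  have hkeyR : ((2:ℝ)*ℓ) * ((2*ℓ-1).factorial : ℝ)
      ≤ (AA (2*ℓ) (ℓ+t) : ℝ) + ((ℓ:ℝ) - t) * ((2*ℓ-1).factorial : ℝ) := by
    have h := (Nat.cast_le (α := ℝ)).mpr hkey
    push_cast at h
    rw [hfac] at h
    rw [show ((ℓ - t : ℕ) : ℝ) = (ℓ:ℝ) - t from by
      rw [Nat.cast_sub (by omega)]] at h
    exact h
  have hS : ((ℓ:ℝ) + t) * ((2*ℓ-1).factorial : ℝ) ≤ (AA (2*ℓ) (ℓ+t) : ℝ) := by nlinarith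
  -- Bound the subtracted term
  have hF : (0:ℝ) < ((2*ℓ-1).factorial : ℝ) := by positivity
  have hy' : (0:ℝ) < y + 1 := by linarith
  have hc : ((ℓ - t - 1 : ℕ) : ℝ) = (ℓ:ℝ) - t - 1 := by
    rw [show ℓ - t - 1 = ℓ - (t+1) by omega, Nat.cast_sub htℓ]
    push_cast; ring
  have hB : ((ℓ : ℝ) + t) / (y + 1) + ((ℓ - t - 1 : ℕ) : ℝ) * (y / (y + 1)) < (ℓ:ℝ) + t := by
    rw [hc]
    have heq : ((ℓ : ℝ) + t) / (y + 1) + ((ℓ:ℝ) - t - 1) * (y / (y + 1))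
        = (((ℓ:ℝ) + t) + ((ℓ:ℝ) - t - 1) * y) / (y + 1) := by
      field_simp
    rw [heq, div_lt_iff₀ hy']
    have ht0 : (1:ℝ) ≤ (t:ℝ) := by exact_mod_cast ht1
    nlinarith
  rw [show 2 * ℓ + 1 - 2 = 2*ℓ-1 by omega] at *
  rw [hsum]
  nlinarith
end

section
/- For any non-negative real numbers x, y, z, we have 2 + x + y + z + xyz ≥ 2√(xy) + 2√(yz) + 2√(xz), with equality if and only if x = y = z = 1. -/
lemma key_ineq_case (a b c : ℝ) (hc : 0 ≤ c) (hcase : 0 ≤ (a-1)*(b-1)) :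
    2 + a^2 + b^2 + c^2 + a^2*b^2*c^2 ≥ 2*(a*b) + 2*(b*c) + 2*(a*c) := by
  nlinarith [sq_nonneg (a*b*c-1), sq_nonneg (a-b), sq_nonneg (c-1), mul_nonneg hc hcase]

lemma key_eq_case (a b c : ℝ) (ha : 0 ≤ a) (hc : 0 ≤ c) (hcase : 0 ≤ (a-1)*(b-1))
    (heq : 2 + a^2 + b^2 + c^2 + a^2*b^2*c^2 = 2*(a*b) + 2*(b*c) + 2*(a*c)) :
    a = 1 ∧ b = 1 ∧ c = 1 := by
  have h1 : (c-1)^2 ≤ 0 := by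
    nlinarith [sq_nonneg (a*b*c-1), sq_nonneg (a-b), mul_nonneg hc hcase]
  have h2 : (a-b)^2 ≤ 0 := by
    nlinarith [sq_nonneg (a*b*c-1), sq_nonneg (c-1), mul_nonneg hc hcase]
  have h3 : (a*b*c-1)^2 ≤ 0 := by
    nlinarith [sq_nonneg (a-b), sq_nonneg (c-1), mul_nonneg hc hcase]
  have hc1 : c = 1 := by nlinarith [sq_nonneg (c-1)]
  have hab : a = b := by nlinarith [sq_nonneg (a-b)]
  have habc : a*b*c = 1 := by nlinarith [sq_nonneg (a*b*c-1)]
  have ha2 : a^2 = 1 := by rw [hc1, ← hab] at habc; nlinarith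
  have ha1 : a = 1 := by
    have : (a-1)*(a+1) = 0 := by nlinarith
    rcases mul_eq_zero.mp this with h | h
    · linarith
    · linarith
  exact ⟨ha1, by rw [← hab, ha1], hc1⟩

lemma key_s18 (a b c : ℝ) (ha : 0 ≤ a) (hb : 0 ≤ b) (hc : 0 ≤ c) :
    2 + a^2 + b^2 + c^2 + a^2*b^2*c^2 ≥ 2*(a*b) + 2*(b*c) + 2*(a*c) ∧
    (2 + a^2 + b^2 + c^2 + a^2*b^2*c^2 = 2*(a*b) + 2*(b*c) + 2*(a*c) ↔
      a = 1 ∧ b = 1 ∧ c = 1) := by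
  have hpig : 0 ≤ (a-1)*(b-1) ∨ 0 ≤ (b-1)*(c-1) ∨ 0 ≤ (a-1)*(c-1) := by
    rcases le_total a 1 with h1 | h1 <;> rcases le_total b 1 with h2 | h2 <;>
      rcases le_total c 1 with h3 | h3 <;>
      first
        | (left; nlinarith)
        | (right; left; nlinarith)
        | (right; right; nlinarith)
  constructor
  · rcases hpig with h | h | h
    · exact key_ineq_case a b c hc h
    · have := key_ineq_case b c a ha h
      linarith
    · have := key_ineq_case a c b hb h
      linarith
  · constructor
    · intro heq
      rcases hpig with h | h | h
      · exact key_eq_case a b c ha hc h heq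
      · obtain ⟨h1, h2, h3⟩ := key_eq_case b c a hb ha h (by linarith)
        exact ⟨h3, h1, h2⟩
      · obtain ⟨h1, h2, h3⟩ := key_eq_case a c b ha hb h (by linarith)
        exact ⟨h1, h3, h2⟩
    · rintro ⟨rfl, rfl, rfl⟩
      norm_num

/-- For any non-negative reals `x, y, z`,
`2 + x + y + z + xyz ≥ 2√(xy) + 2√(yz) + 2√(xz)`, with equality iff `x = y = z = 1`. -/
theorem three_variable_ineq (x y z : ℝ) (hx : 0 ≤ x) (hy : 0 ≤ y) (hz : 0 ≤ z) :
    2 + x + y + z + x * y * z ≥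
      2 * Real.sqrt (x * y) + 2 * Real.sqrt (y * z) + 2 * Real.sqrt (x * z) ∧
    (2 + x + y + z + x * y * z =
        2 * Real.sqrt (x * y) + 2 * Real.sqrt (y * z) + 2 * Real.sqrt (x * z) ↔
      x = 1 ∧ y = 1 ∧ z = 1) := by
  obtain ⟨a, ha, rfl⟩ : ∃ a, 0 ≤ a ∧ x = a^2 :=
    ⟨Real.sqrt x, Real.sqrt_nonneg x, (Real.sq_sqrt hx).symm⟩
  obtain ⟨b, hb, rfl⟩ : ∃ b, 0 ≤ b ∧ y = b^2 :=
    ⟨Real.sqrt y, Real.sqrt_nonneg y, (Real.sq_sqrt hy).symm⟩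
  obtain ⟨c, hc, rfl⟩ : ∃ c, 0 ≤ c ∧ z = c^2 :=
    ⟨Real.sqrt z, Real.sqrt_nonneg z, (Real.sq_sqrt hz).symm⟩
  rw [show a^2*b^2 = (a*b)^2 by ring, show b^2*c^2 = (b*c)^2 by ring,
      show a^2*c^2 = (a*c)^2 by ring,
      Real.sqrt_sq (mul_nonneg ha hb), Real.sqrt_sq (mul_nonneg hb hc),
      Real.sqrt_sq (mul_nonneg ha hc)]
  obtain ⟨H1, H2⟩ := key_s18 a b c ha hb hc
  have hatom : (a*b)^2 * c^2 = a^2*b^2*c^2 := by ring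
  have sqone : ∀ t : ℝ, 0 ≤ t → (t^2 = 1 ↔ t = 1) := by
    intro t ht
    constructor
    · intro h
      have : (t-1)*(t+1) = 0 := by nlinarith
      rcases mul_eq_zero.mp this with h' | h' <;> [linarith; linarith]
    · rintro rfl; norm_num
  constructor
  · linarith [H1]
  · constructor
    · intro h
      have : a = 1 ∧ b = 1 ∧ c = 1 := H2.mp (by linarith)
      exact ⟨(sqone a ha).mpr this.1, (sqone b hb).mpr this.2.1, (sqone c hc).mpr this.2.2⟩
    · rintro ⟨h1, h2, h3⟩
      have := H2.mpr ⟨(sqone a ha).mp h1, (sqone b hb).mp h2, (sqone c hc).mp h3⟩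
      linarith
end
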